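/- arXiv:2402.04747 — 10 statements merged into one kernel-verified Lean document; each statement's English description precedes it below -/
import Mathlib

section
/- For every k ∈ X with ‖k‖ ≤ 1, it holds that φ⁺(x⁺_α + k − y⁺_α) ≥ (tρ/25)·(1/16 − v*(k)/ρ) − |e*(k − (ρ/4)v)| − |h*(k − (ρ/4)v)|. -/
lemma neg_abs_sub_abs_le_convexComb {a b μ : ℝ} (h0 : 0 ≤ μ) (h1 : μ ≤ 1) :
    -|a| - |b| ≤ μ * a + (1 - μ) * b := by
  have ha : μ * -|a| ≤ μ * a := mul_le_mul_of_nonneg_left (neg_abs_le a) h0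
  have hb : (1 - μ) * -|b| ≤ (1 - μ) * b :=
    mul_le_mul_of_nonneg_left (neg_abs_le b) (sub_nonneg.mpr h1)
  nlinarith [abs_nonneg a, abs_nonneg b]

lemma neg_abs_sub_abs_sub_le_convexComb_apply {X : Type*} [TopologicalSpace X]
    [AddCommGroup X] [Module ℝ X] (f g u : X →L[ℝ] ℝ) {μ : ℝ} (h0 : 0 ≤ μ) (h1 : μ ≤ 1)
    (c : ℝ) (w : X) :
    -|f w| - |g w| - (1 - μ) * c * u w ≤ (μ • f + (1 - μ) • (g - c • u)) w := by
  have hconv := neg_abs_sub_abs_le_convexComb (a := f w) (b := g w) h0 h1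
  simp only [add_apply, smul_apply, sub_apply, smul_eq_mul]
  linarith

theorem statement4_general {X : Type*} [NormedAddCommGroup X] [NormedSpace ℝ X]
    (ρ t : ℝ) (hρ0 : 0 < ρ) (hρ1 : ρ < 1 / 4) (ht0 : 0 < t)
    (v : X)
    (vs es hs : X →L[ℝ] ℝ)
    (hvv : vs v = 1)
    (xp yp : X)
    (hyp : yp = xp + (ρ / 4) • v)
    (lam : ℝ) (hlam : lam = 1 - ρ / 100)
    (phip : X →L[ℝ] ℝ)
    (hphip : phip = lam • es + (1 - lam) • (hs - (4 * t / ρ) • vs))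
    (k : X) :
    phip (xp + k - yp) ≥
      t * ρ / 25 * (1 / 16 - vs k / ρ) - |es (k - (ρ / 4) • v)| - |hs (k - (ρ / 4) • v)| := by
  have hw : xp + k - yp = k - (ρ / 4) • v := by rw [hyp]; abel
  have hvw : vs (k - (ρ / 4) • v) = vs k - ρ / 4 := by simp [hvv]
  have hbound := neg_abs_sub_abs_sub_le_convexComb_apply es hs vs
    (μ := lam) (by linarith) (by linarith) (4 * t / ρ) (k - (ρ / 4) • v)
  -- the `v*`-part of `φ⁺` contributes `tρ/100`, more than the `tρ/400` the bound asks for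
  have hdrift : (1 - lam) * (4 * t / ρ) * (vs k - ρ / 4) = t / 25 * vs k - t * ρ / 100 := by
    rw [hlam]; field_simp; ring
  have htarget : t * ρ / 25 * (1 / 16 - vs k / ρ) = t * ρ / 400 - t / 25 * vs k := by
    field_simp; ring
  rw [hvw, hdrift] at hbound
  rw [hw, hphip]
  linarith [mul_pos ht0 hρ0]

theorem statement4 {X : Type*} [NormedAddCommGroup X] [NormedSpace ℝ X] [CompleteSpace X]
    (ρ t : ℝ) (hρ0 : 0 < ρ) (hρ1 : ρ < 1 / 4) (ht0 : 0 < t) (ht1 : t < ρ / 16)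
    (v e h : X) (hv : ‖v‖ = 1) (he : ‖e‖ = 1) (hh : ‖h‖ = 1)
    (vs es hs : X →L[ℝ] ℝ) (hvs : ‖vs‖ = 1) (hes : ‖es‖ = 1) (hhs : ‖hs‖ = 1)
    (hvv : vs v = 1) (hee : es e = 1) (hhh : hs h = 1) (heh : |es h| < ρ / 800)
    (xp xm yp ym : X)
    (hxp : xp = (1 - ρ / 2) • e + t • h) (hxm : xm = (1 - ρ / 2) • e - t • h)
    (hyp : yp = xp + (ρ / 4) • v) (hym : ym = xm - (ρ / 4) • v)
    (lam : ℝ) (hlam : lam = 1 - ρ / 100)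
    (phip phim : X →L[ℝ] ℝ)
    (hphip : phip = lam • es + (1 - lam) • (hs - (4 * t / ρ) • vs))
    (hphim : phim = lam • es + (1 - lam) • (-hs + (4 * t / ρ) • vs))
    (k : X) (hk : ‖k‖ ≤ 1) :
    phip (xp + k - yp) ≥
      t * ρ / 25 * (1 / 16 - vs k / ρ) - |es (k - (ρ / 4) • v)| - |hs (k - (ρ / 4) • v)| :=
  statement4_general ρ t hρ0 hρ1 ht0 v vs es hs hvv xp yp hyp lam hlam phip hphip k
end

section
/- For every k ∈ X with ‖k‖ ≤ 1, it holds that φ⁺(x⁺_α + k − y⁻_α) ≥ (tρ/25)·(1/16 − v*(k)/ρ) − |e*(k + (ρ/4)v)| − |h*(k + (ρ/4)v)|. -/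
/-!
Since `x⁺ + k - y⁻ = 2t·h + (k + (ρ/4)v)` and `1 - λ = ρ/100`, the value of `φ⁺` there is
`tρ/100 - (t/25)·v*(k)` up to error terms: at most `tρ/400` from `|e*(h)| < ρ/800`, at most
`tρ/200` from `2t²/25 · v*(h)` with `t < ρ/16`, and at most `|e*(k + (ρ/4)v)| + |h*(k + (ρ/4)v)|`.
-/

lemma neg_abs_le_mul_of_nonneg_of_le_one {c : ℝ} (a : ℝ) (hc0 : 0 ≤ c) (hc1 : c ≤ 1) :
    -|a| ≤ c * a := by
  have : |c * a| ≤ |a| := by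
    rw [abs_mul, abs_of_nonneg hc0]
    exact mul_le_of_le_one_left (abs_nonneg a) hc1
  linarith [neg_abs_le (c * a)]

/-- The scalar inequality behind the theorem, with `p = e*(h)`, `q = v*(h)`, `c = v*(k)`,
`A = e*(k + (ρ/4)v)` and `B = h*(k + (ρ/4)v)`. -/
lemma lower_bound_of_coordinates {ρ t p q c A B : ℝ} (hρ0 : 0 < ρ) (hρ1 : ρ ≤ 100)
    (ht0 : 0 < t) (ht1 : t < ρ / 16) (hp : |p| < ρ / 800) (hq : q ≤ 1) :
    t * ρ / 25 * (1 / 16 - c / ρ) - |A| - |B| ≤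
      (1 - ρ / 100) * (2 * t * p + A) +
        ρ / 100 * (2 * t + B - 4 * t / ρ * (2 * t * q + (c + ρ / 4))) := by
  have expand : (1 - ρ / 100) * (2 * t * p + A) +
        ρ / 100 * (2 * t + B - 4 * t / ρ * (2 * t * q + (c + ρ / 4))) =
      (1 - ρ / 100) * (2 * t * p) + (1 - ρ / 100) * A + ρ / 100 * B
        + t * ρ / 100 - t / 25 * c - 2 * t ^ 2 / 25 * q := by
    field_simp; ring
  have target : t * ρ / 25 * (1 / 16 - c / ρ) = t * ρ / 400 - t / 25 * c := by
    field_simp; ring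
  have hpt : -(t * ρ / 400) ≤ (1 - ρ / 100) * (2 * t * p) := by
    have := neg_abs_le_mul_of_nonneg_of_le_one (2 * t * p)
      (c := 1 - ρ / 100) (by linarith) (by linarith)
    rw [abs_mul, abs_of_pos (by positivity : 0 < 2 * t)] at this
    nlinarith
  have hqt : 2 * t ^ 2 / 25 * q ≤ t * ρ / 200 := by
    nlinarith [mul_le_mul_of_nonneg_left hq (by positivity : (0 : ℝ) ≤ 2 * t ^ 2 / 25)]
  have hA := neg_abs_le_mul_of_nonneg_of_le_one A (c := 1 - ρ / 100) (by linarith) (by linarith)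
  have hB := neg_abs_le_mul_of_nonneg_of_le_one B (c := ρ / 100) (by linarith) (by linarith)
  rw [expand, target]
  linarith

theorem statement5_general {X : Type*} [NormedAddCommGroup X] [NormedSpace ℝ X]
    (ρ t : ℝ) (hρ0 : 0 < ρ) (hρ1 : ρ < 1 / 4) (ht0 : 0 < t) (ht1 : t < ρ / 16)
    (v e h : X) (hh : ‖h‖ = 1)
    (vs es hs : X →L[ℝ] ℝ) (hvs : ‖vs‖ = 1)
    (hvv : vs v = 1) (hhh : hs h = 1) (heh : |es h| < ρ / 800)
    (xp xm ym : X)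
    (hxp : xp = (1 - ρ / 2) • e + t • h) (hxm : xm = (1 - ρ / 2) • e - t • h)
    (hym : ym = xm - (ρ / 4) • v)
    (lam : ℝ) (hlam : lam = 1 - ρ / 100)
    (phip : X →L[ℝ] ℝ)
    (hphip : phip = lam • es + (1 - lam) • (hs - (4 * t / ρ) • vs))
    (k : X) :
    phip (xp + k - ym) ≥
      t * ρ / 25 * (1 / 16 - vs k / ρ) - |es (k + (ρ / 4) • v)| - |hs (k + (ρ / 4) • v)| := by
  have displacement : xp + k - ym = (2 * t) • h + (k + (ρ / 4) • v) := by
    rw [hxp, hym, hxm]; module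
  have hvsh : vs h ≤ 1 := by
    simpa [hvs, hh] using (le_abs_self (vs h)).trans (vs.le_opNorm h)
  set u := k + (ρ / 4) • v
  have hvsu : vs u = vs k + ρ / 4 := by simp [u, hvv]
  have value : phip (xp + k - ym) = (1 - ρ / 100) * (2 * t * es h + es u) +
      ρ / 100 * (2 * t + hs u - 4 * t / ρ * (2 * t * vs h + (vs k + ρ / 4))) := by
    rw [displacement, hphip, hlam, ← hvsu]
    simp only [add_apply, smul_apply, sub_apply, map_add, map_smul, hhh, smul_eq_mul]
    ring
  rw [value]
  exact lower_bound_of_coordinates hρ0 (by linarith) ht0 ht1 heh hvsh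

theorem statement5 {X : Type*} [NormedAddCommGroup X] [NormedSpace ℝ X] [CompleteSpace X]
    (ρ t : ℝ) (hρ0 : 0 < ρ) (hρ1 : ρ < 1 / 4) (ht0 : 0 < t) (ht1 : t < ρ / 16)
    (v e h : X) (hv : ‖v‖ = 1) (he : ‖e‖ = 1) (hh : ‖h‖ = 1)
    (vs es hs : X →L[ℝ] ℝ) (hvs : ‖vs‖ = 1) (hes : ‖es‖ = 1) (hhs : ‖hs‖ = 1)
    (hvv : vs v = 1) (hee : es e = 1) (hhh : hs h = 1) (heh : |es h| < ρ / 800)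
    (xp xm yp ym : X)
    (hxp : xp = (1 - ρ / 2) • e + t • h) (hxm : xm = (1 - ρ / 2) • e - t • h)
    (hyp : yp = xp + (ρ / 4) • v) (hym : ym = xm - (ρ / 4) • v)
    (lam : ℝ) (hlam : lam = 1 - ρ / 100)
    (phip phim : X →L[ℝ] ℝ)
    (hphip : phip = lam • es + (1 - lam) • (hs - (4 * t / ρ) • vs))
    (hphim : phim = lam • es + (1 - lam) • (-hs + (4 * t / ρ) • vs))
    (k : X) (hk : ‖k‖ ≤ 1) :
    phip (xp + k - ym) ≥
      t * ρ / 25 * (1 / 16 - vs k / ρ) - |es (k + (ρ / 4) • v)| - |hs (k + (ρ / 4) • v)| :=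
  statement5_general ρ t hρ0 hρ1 ht0 ht1 v e h hh vs es hs hvs hvv hhh heh xp xm ym hxp hxm hym lam
    hlam phip hphip k
end

section
/- For every k ∈ X with ‖k‖ ≤ 1 and every z ∈ X with ‖z‖ ≤ 1 and e*(z) ≤ 1 − ρ, it holds that φ⁺(x⁺_α + k − z) ≥ ρ/8 − |e*(k)|. -/
/-!
On `w = x⁺ + k - z` the main part `λ e*` of `φ⁺` is large: `e*(x⁺) ≈ 1 - ρ/2` while
`e*(z) ≤ 1 - ρ`, so `e*(w) ≥ ρ/2 - ρ/800 - |e*(k)|`. The perturbation `h* - (4t/ρ) v*` has norm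
at most `5/4` and `‖w‖ ≤ 3`, and it enters with weight `1 - λ = ρ/100`, which costs only
`(15/400) ρ`.
-/

theorem norm_add_sub_le_add_two {E : Type*} [SeminormedAddCommGroup E] {x k z : E}
    (hk : ‖k‖ ≤ 1) (hz : ‖z‖ ≤ 1) :
    ‖x + k - z‖ ≤ ‖x‖ + 2 := by
  calc ‖x + k - z‖ ≤ ‖x‖ + ‖k‖ + ‖z‖ := norm_sub_le_of_le (norm_add_le x k) le_rfl
    _ ≤ ‖x‖ + 2 := by linarith

section

variable {E : Type*} [NormedAddCommGroup E] [NormedSpace ℝ E]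

theorem norm_smul_add_smul_le_of_norm_eq_one {e h : E} (he : ‖e‖ = 1) (hh : ‖h‖ = 1)
    {a b : ℝ} (ha : 0 ≤ a) (hb : 0 ≤ b) : ‖a • e + b • h‖ ≤ a + b := by
  calc ‖a • e + b • h‖ ≤ ‖a • e‖ + ‖b • h‖ := norm_add_le _ _
    _ = a + b := by rw [norm_smul, norm_smul, he, hh, Real.norm_of_nonneg ha,
      Real.norm_of_nonneg hb, mul_one, mul_one]

theorem ContinuousLinearMap.norm_sub_smul_le_of_norm_eq_one {f g : E →L[ℝ] ℝ}
    (hf : ‖f‖ = 1) (hg : ‖g‖ = 1) (c : ℝ) : ‖f - c • g‖ ≤ 1 + |c| := by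
  calc ‖f - c • g‖ ≤ ‖f‖ + ‖c • g‖ := norm_sub_le _ _
    _ = 1 + |c| := by rw [norm_smul, hf, hg, Real.norm_eq_abs, mul_one]

theorem ContinuousLinearMap.sub_le_smul_add_one_sub_smul_apply (f g : E →L[ℝ] ℝ) {lam : ℝ}
    (hlam : lam ≤ 1) (x : E) :
    lam * f x - (1 - lam) * (‖g‖ * ‖x‖) ≤ (lam • f + (1 - lam) • g) x := by
  have hg : -(‖g‖ * ‖x‖) ≤ g x := neg_le_of_abs_le (g.le_opNorm x)
  simp only [add_apply, smul_apply, smul_eq_mul]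
  nlinarith

end

theorem statement6_general {X : Type*} [NormedAddCommGroup X] [NormedSpace ℝ X]
    (ρ t : ℝ) (hρ0 : 0 < ρ) (hρ1 : ρ < 1 / 4) (ht0 : 0 < t) (ht1 : t < ρ / 16)
    (e h : X) (he : ‖e‖ = 1) (hh : ‖h‖ = 1)
    (vs es hs : X →L[ℝ] ℝ) (hvs : ‖vs‖ = 1) (hhs : ‖hs‖ = 1)
    (hee : es e = 1) (heh : |es h| < ρ / 800)
    (xp : X)
    (hxp : xp = (1 - ρ / 2) • e + t • h)
    (lam : ℝ) (hlam : lam = 1 - ρ / 100)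
    (phip : X →L[ℝ] ℝ)
    (hphip : phip = lam • es + (1 - lam) • (hs - (4 * t / ρ) • vs))
    (k : X) (hk : ‖k‖ ≤ 1) (z : X) (hz : ‖z‖ ≤ 1) (hez : es z ≤ 1 - ρ) :
    phip (xp + k - z) ≥ ρ / 8 - |es k| := by
  set ψ := hs - (4 * t / ρ) • vs
  have hxp_norm : ‖xp‖ ≤ 1 := by
    rw [hxp]
    linarith [norm_smul_add_smul_le_of_norm_eq_one he hh (by linarith : 0 ≤ 1 - ρ / 2) ht0.le]
  have hw : ‖xp + k - z‖ ≤ 3 := by linarith [norm_add_sub_le_add_two (x := xp) hk hz]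
  have hψ : ‖ψ‖ ≤ 5 / 4 := by
    have hc : |4 * t / ρ| ≤ 1 / 4 := by
      rw [abs_of_pos (by positivity), div_le_iff₀ hρ0]; linarith
    linarith [hs.norm_sub_smul_le_of_norm_eq_one hhs hvs (4 * t / ρ)]
  have hψw : ‖ψ‖ * ‖xp + k - z‖ ≤ 15 / 4 := by
    nlinarith [norm_nonneg ψ, norm_nonneg (xp + k - z)]
  have hesw : ρ / 2 - ρ / 800 - |es k| ≤ es (xp + k - z) := by
    have hth : -(ρ / 800) ≤ t * es h := by
      nlinarith [neg_abs_le (es h), abs_nonneg (es h)]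
    rw [map_sub, map_add, hxp, map_add, map_smul, map_smul, hee, smul_eq_mul, smul_eq_mul]
    linarith [neg_abs_le (es k)]
  have hcomb := es.sub_le_smul_add_one_sub_smul_apply ψ (lam := lam) (by linarith) (xp + k - z)
  rw [ge_iff_le, hphip]
  subst hlam
  nlinarith [abs_nonneg (es k)]

theorem statement6 {X : Type*} [NormedAddCommGroup X] [NormedSpace ℝ X] [CompleteSpace X]
    (ρ t : ℝ) (hρ0 : 0 < ρ) (hρ1 : ρ < 1 / 4) (ht0 : 0 < t) (ht1 : t < ρ / 16)
    (v e h : X) (hv : ‖v‖ = 1) (he : ‖e‖ = 1) (hh : ‖h‖ = 1)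
    (vs es hs : X →L[ℝ] ℝ) (hvs : ‖vs‖ = 1) (hes : ‖es‖ = 1) (hhs : ‖hs‖ = 1)
    (hvv : vs v = 1) (hee : es e = 1) (hhh : hs h = 1) (heh : |es h| < ρ / 800)
    (xp xm yp ym : X)
    (hxp : xp = (1 - ρ / 2) • e + t • h) (hxm : xm = (1 - ρ / 2) • e - t • h)
    (hyp : yp = xp + (ρ / 4) • v) (hym : ym = xm - (ρ / 4) • v)
    (lam : ℝ) (hlam : lam = 1 - ρ / 100)
    (phip phim : X →L[ℝ] ℝ)
    (hphip : phip = lam • es + (1 - lam) • (hs - (4 * t / ρ) • vs))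
    (hphim : phim = lam • es + (1 - lam) • (-hs + (4 * t / ρ) • vs))
    (k : X) (hk : ‖k‖ ≤ 1) (z : X) (hz : ‖z‖ ≤ 1) (hez : es z ≤ 1 - ρ) :
    phip (xp + k - z) ≥ ρ / 8 - |es k| :=
  statement6_general ρ t hρ0 hρ1 ht0 ht1 e h he hh vs es hs hvs hhs hee heh xp hxp lam hlam phip
    hphip k hk z hz hez
end

section
/- For every k ∈ X with ‖k‖ ≤ 1, it holds that φ⁻(x⁻_α + k − y⁻_α) ≥ (tρ/25)·(1/16 + v*(k)/ρ) − |e*(k + (ρ/4)v)| − |h*(k + (ρ/4)v)|. -/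
theorem sub_abs_sub_abs_le_apply_of_eq_convexComb {X : Type*} [NormedAddCommGroup X]
    [NormedSpace ℝ X] {φ f g ψ : X →L[ℝ] ℝ} {lam c : ℝ}
    (hφ : φ = lam • f + (1 - lam) • (-g + c • ψ)) (hlam0 : 0 ≤ lam) (hlam1 : lam ≤ 1) (w : X) :
    (1 - lam) * c * ψ w - |f w| - |g w| ≤ φ w := by
  have hf : -|f w| ≤ lam * f w := by
    nlinarith [neg_abs_le (f w), abs_nonneg (f w)]
  have hg : -|g w| ≤ (1 - lam) * -g w := by
    nlinarith [neg_abs_le (g w), le_abs_self (g w), abs_nonneg (g w)]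
  rw [hφ]
  simp only [add_apply, smul_apply, neg_apply, smul_eq_mul]
  linarith

theorem statement7_general {X : Type*} [NormedAddCommGroup X] [NormedSpace ℝ X]
    (ρ t : ℝ) (hρ0 : 0 < ρ) (hρ1 : ρ < 1 / 4) (ht0 : 0 < t)
    (v : X)
    (vs es hs : X →L[ℝ] ℝ)
    (hvv : vs v = 1)
    (xm ym : X)
    (hym : ym = xm - (ρ / 4) • v)
    (lam : ℝ) (hlam : lam = 1 - ρ / 100)
    (phim : X →L[ℝ] ℝ)
    (hphim : phim = lam • es + (1 - lam) • (-hs + (4 * t / ρ) • vs))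
    (k : X) :
    phim (xm + k - ym) ≥
      t * ρ / 25 * (1 / 16 + vs k / ρ) - |es (k + (ρ / 4) • v)| - |hs (k + (ρ / 4) • v)| := by
  have hw : xm + k - ym = k + (ρ / 4) • v := by rw [hym]; abel
  have hvw : vs (k + (ρ / 4) • v) = vs k + ρ / 4 := by simp [hvv]
  have hbound := sub_abs_sub_abs_le_apply_of_eq_convexComb hphim (by linarith) (by linarith)
    (k + (ρ / 4) • v)
  have hgain : (1 - lam) * (4 * t / ρ) * vs (k + (ρ / 4) • v) =
      t * ρ / 25 * (1 / 4 + vs k / ρ) := by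
    rw [hvw, hlam]; field_simp; ring
  rw [hw, ge_iff_le]
  nlinarith [mul_pos ht0 hρ0]

theorem statement7 {X : Type*} [NormedAddCommGroup X] [NormedSpace ℝ X] [CompleteSpace X]
    (ρ t : ℝ) (hρ0 : 0 < ρ) (hρ1 : ρ < 1 / 4) (ht0 : 0 < t) (ht1 : t < ρ / 16)
    (v e h : X) (hv : ‖v‖ = 1) (he : ‖e‖ = 1) (hh : ‖h‖ = 1)
    (vs es hs : X →L[ℝ] ℝ) (hvs : ‖vs‖ = 1) (hes : ‖es‖ = 1) (hhs : ‖hs‖ = 1)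
    (hvv : vs v = 1) (hee : es e = 1) (hhh : hs h = 1) (heh : |es h| < ρ / 800)
    (xp xm yp ym : X)
    (hxp : xp = (1 - ρ / 2) • e + t • h) (hxm : xm = (1 - ρ / 2) • e - t • h)
    (hyp : yp = xp + (ρ / 4) • v) (hym : ym = xm - (ρ / 4) • v)
    (lam : ℝ) (hlam : lam = 1 - ρ / 100)
    (phip phim : X →L[ℝ] ℝ)
    (hphip : phip = lam • es + (1 - lam) • (hs - (4 * t / ρ) • vs))
    (hphim : phim = lam • es + (1 - lam) • (-hs + (4 * t / ρ) • vs))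
    (k : X) (hk : ‖k‖ ≤ 1) :
    phim (xm + k - ym) ≥
      t * ρ / 25 * (1 / 16 + vs k / ρ) - |es (k + (ρ / 4) • v)| - |hs (k + (ρ / 4) • v)| :=
  statement7_general ρ t hρ0 hρ1 ht0 v vs es hs hvv xm ym hym lam hlam phim hphim k
end

section
/- For every k ∈ X with ‖k‖ ≤ 1, it holds that φ⁻(x⁻_α + k − y⁺_α) ≥ (tρ/25)·(1/16 + v*(k)/ρ) − |e*(k − (ρ/4)v)| − |h*(k − (ρ/4)v)|. -/
lemma neg_abs_le_mul {μ : ℝ} (a : ℝ) (hμ0 : 0 ≤ μ) (hμ1 : μ ≤ 1) : -|a| ≤ μ * a := by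
  have : |μ * a| ≤ |a| := by
    rw [abs_mul, abs_of_nonneg hμ0]
    exact mul_le_of_le_one_left (abs_nonneg a) hμ1
  linarith [neg_abs_le (μ * a)]

/-- The estimate in scalar form, with `a = e*(w)`, `b = h*(w)`, `c = v*(k)`, `d = e*(h)`,
`f = v*(h)` and `w = k - (ρ/4) v`. The errors `2tλd < tρ/400` and `(2t²/25) f < tρ/200` are
absorbed exactly by the gain `tρ/50 - tρ/100 - tρ/400`. -/
lemma lower_bound_phiMinus {ρ t a b c d f : ℝ} (hρ0 : 0 < ρ) (hρ1 : ρ ≤ 100) (ht0 : 0 < t)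
    (ht1 : t < ρ / 16) (hd : |d| < ρ / 800) (hf : f ≤ 1) :
    t * ρ / 25 * (1 / 16 + c / ρ) - |a| - |b| ≤
      (1 - ρ / 100) * (a - 2 * t * d) +
        ρ / 100 * (-(b - 2 * t) + 4 * t / ρ * (c - ρ / 4 - 2 * t * f)) := by
  have hlam0 : 0 ≤ 1 - ρ / 100 := by linarith
  have hlam1 : 1 - ρ / 100 ≤ 1 := by linarith
  have ha := neg_abs_le_mul a hlam0 hlam1
  have hb := neg_abs_le_mul (-b) (by positivity : 0 ≤ ρ / 100) (by linarith)
  rw [abs_neg] at hb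
  have hlam_d : (1 - ρ / 100) * d < ρ / 800 := by
    linarith [neg_abs_le_mul (-d) hlam0 hlam1, abs_neg d]
  have hdt_le : 2 * t * ((1 - ρ / 100) * d) ≤ 2 * t * (ρ / 800) :=
    mul_le_mul_of_nonneg_left hlam_d.le (by positivity)
  have hft : t * t * f ≤ t * (ρ / 16) := by nlinarith
  have hexpand : (1 - ρ / 100) * (a - 2 * t * d) +
        ρ / 100 * (-(b - 2 * t) + 4 * t / ρ * (c - ρ / 4 - 2 * t * f)) =
      (1 - ρ / 100) * a - 2 * t * ((1 - ρ / 100) * d) + ρ / 100 * -b + t * ρ / 50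
        + t * c / 25 - t * ρ / 100 - 2 / 25 * (t * t * f) := by
    field_simp; ring
  have hlhs : t * ρ / 25 * (1 / 16 + c / ρ) = t * ρ / 400 + t * c / 25 := by
    field_simp; ring
  rw [hexpand, hlhs]
  linarith

theorem statement8_general {X : Type*} [NormedAddCommGroup X] [NormedSpace ℝ X]
    (ρ t : ℝ) (hρ0 : 0 < ρ) (hρ1 : ρ < 1 / 4) (ht0 : 0 < t) (ht1 : t < ρ / 16)
    (v e h : X) (hh : ‖h‖ = 1)
    (vs es hs : X →L[ℝ] ℝ) (hvs : ‖vs‖ = 1)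
    (hvv : vs v = 1) (hhh : hs h = 1) (heh : |es h| < ρ / 800)
    (xp xm yp : X)
    (hxp : xp = (1 - ρ / 2) • e + t • h) (hxm : xm = (1 - ρ / 2) • e - t • h)
    (hyp : yp = xp + (ρ / 4) • v)
    (lam : ℝ) (hlam : lam = 1 - ρ / 100)
    (phim : X →L[ℝ] ℝ)
    (hphim : phim = lam • es + (1 - lam) • (-hs + (4 * t / ρ) • vs))
    (k : X) :
    phim (xm + k - yp) ≥
      t * ρ / 25 * (1 / 16 + vs k / ρ) - |es (k - (ρ / 4) • v)| - |hs (k - (ρ / 4) • v)| := by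
  set w := k - (ρ / 4) • v
  have hsub : xm + k - yp = w - (2 * t) • h := by
    rw [hxm, hyp, hxp]; module
  have hvh : vs h ≤ 1 := by
    have := vs.le_opNorm h
    rw [hvs, hh, Real.norm_eq_abs, one_mul] at this
    exact le_of_abs_le this
  have hval : phim (xm + k - yp) = (1 - ρ / 100) * (es w - 2 * t * es h) +
      ρ / 100 * (-(hs w - 2 * t) + 4 * t / ρ * (vs k - ρ / 4 - 2 * t * vs h)) := by
    simp only [hsub, hphim, hlam, w, map_sub, map_smul, hhh, hvv, sub_sub_cancel,
      add_apply, smul_apply, neg_apply, smul_eq_mul]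
    ring
  rw [hval, ge_iff_le]
  exact lower_bound_phiMinus hρ0 (by linarith) ht0 ht1 heh hvh

theorem statement8 {X : Type*} [NormedAddCommGroup X] [NormedSpace ℝ X] [CompleteSpace X]
    (ρ t : ℝ) (hρ0 : 0 < ρ) (hρ1 : ρ < 1 / 4) (ht0 : 0 < t) (ht1 : t < ρ / 16)
    (v e h : X) (hv : ‖v‖ = 1) (he : ‖e‖ = 1) (hh : ‖h‖ = 1)
    (vs es hs : X →L[ℝ] ℝ) (hvs : ‖vs‖ = 1) (hes : ‖es‖ = 1) (hhs : ‖hs‖ = 1)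
    (hvv : vs v = 1) (hee : es e = 1) (hhh : hs h = 1) (heh : |es h| < ρ / 800)
    (xp xm yp ym : X)
    (hxp : xp = (1 - ρ / 2) • e + t • h) (hxm : xm = (1 - ρ / 2) • e - t • h)
    (hyp : yp = xp + (ρ / 4) • v) (hym : ym = xm - (ρ / 4) • v)
    (lam : ℝ) (hlam : lam = 1 - ρ / 100)
    (phip phim : X →L[ℝ] ℝ)
    (hphip : phip = lam • es + (1 - lam) • (hs - (4 * t / ρ) • vs))
    (hphim : phim = lam • es + (1 - lam) • (-hs + (4 * t / ρ) • vs))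
    (k : X) (hk : ‖k‖ ≤ 1) :
    phim (xm + k - yp) ≥
      t * ρ / 25 * (1 / 16 + vs k / ρ) - |es (k - (ρ / 4) • v)| - |hs (k - (ρ / 4) • v)| :=
  statement8_general ρ t hρ0 hρ1 ht0 ht1 v e h hh vs es hs hvs hvv hhh heh xp xm yp hxp hxm hyp lam
    hlam phim hphim k
end

section
/- For every k ∈ X with ‖k‖ ≤ 1 and every z ∈ X with ‖z‖ ≤ 1 and e*(z) ≤ 1 − ρ, it holds that φ⁻(x⁻_α + k − z) ≥ ρ/8 − |e*(k)|. -/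
open Filter Topology Set

/-! `φ⁻` is `e*` up to a perturbation of weight `1 - λ = ρ/100`. Since `e*(z) ≤ 1 - ρ` and the tilt
`t • h` moves `e*` by at most `t |e*(h)|`, we get `e*(x⁻ + k - z) ≥ ρ/2 - ρ/800 + e*(k)`. The perturbing
functional `-h* + (4t/ρ) v*` has norm at most `2` and `‖x⁻ + k - z‖ ≤ 3`, so it costs at most
`6ρ/100`, leaving far more than `ρ/8 - |e*(k)|`. -/

section

variable {X : Type*} [NormedAddCommGroup X] [NormedSpace ℝ X]

theorem norm_smul_sub_smul_le_of_norm_eq_one {e h : X} (he : ‖e‖ = 1) (hh : ‖h‖ = 1)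
    {a b : ℝ} (ha : 0 ≤ a) (hb : 0 ≤ b) : ‖a • e - b • h‖ ≤ a + b := by
  calc ‖a • e - b • h‖ ≤ ‖a • e‖ + ‖b • h‖ := norm_sub_le _ _
    _ = a + b := by rw [norm_smul, norm_smul, he, hh, Real.norm_of_nonneg ha,
      Real.norm_of_nonneg hb, mul_one, mul_one]

theorem ContinuousLinearMap.le_smul_add_smul_apply (f g : X →L[ℝ] ℝ) {w : X} {lam a B : ℝ}
    (hlam0 : 0 ≤ lam) (hlam1 : lam ≤ 1) (hf : a ≤ f w) (hg : ‖g‖ * ‖w‖ ≤ B) :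
    lam * a - (1 - lam) * B ≤ (lam • f + (1 - lam) • g) w := by
  have hgw : -B ≤ g w := (abs_le.mp ((g.le_opNorm w).trans hg)).1
  simp only [add_apply, smul_apply, smul_eq_mul]
  nlinarith [mul_le_mul_of_nonneg_left hf hlam0,
    mul_le_mul_of_nonneg_left hgw (sub_nonneg.mpr hlam1)]

end

theorem statement9_general {X : Type*} [NormedAddCommGroup X] [NormedSpace ℝ X]
    (ρ t : ℝ) (hρ0 : 0 < ρ) (hρ1 : ρ < 1 / 4) (ht0 : 0 < t) (ht1 : t < ρ / 16)
    (e h : X) (he : ‖e‖ = 1) (hh : ‖h‖ = 1)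
    (vs es hs : X →L[ℝ] ℝ) (hvs : ‖vs‖ = 1) (hhs : ‖hs‖ = 1)
    (hee : es e = 1) (heh : |es h| < ρ / 800)
    (xm : X)
    (hxm : xm = (1 - ρ / 2) • e - t • h)
    (lam : ℝ) (hlam : lam = 1 - ρ / 100)
    (phim : X →L[ℝ] ℝ)
    (hphim : phim = lam • es + (1 - lam) • (-hs + (4 * t / ρ) • vs))
    (k : X) (hk : ‖k‖ ≤ 1) (z : X) (hz : ‖z‖ ≤ 1) (hez : es z ≤ 1 - ρ) :
    phim (xm + k - z) ≥ ρ / 8 - |es k| := by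
  have hu : 4 * t / ρ ≤ 1 := by rw [div_le_one hρ0]; linarith
  have hxm_norm : ‖xm‖ ≤ 1 := by
    rw [hxm]
    linarith [norm_smul_sub_smul_le_of_norm_eq_one he hh (by linarith : 0 ≤ 1 - ρ / 2) ht0.le]
  have hw : ‖xm + k - z‖ ≤ 3 := by linarith [norm_sub_le (xm + k) z, norm_add_le xm k]
  have hg : ‖-hs + (4 * t / ρ) • vs‖ ≤ 2 := by
    calc ‖-hs + (4 * t / ρ) • vs‖ ≤ ‖-hs‖ + ‖(4 * t / ρ) • vs‖ := norm_add_le _ _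
      _ = 1 + 4 * t / ρ := by
          rw [norm_neg, norm_smul, hhs, hvs, Real.norm_of_nonneg (by positivity), mul_one]
      _ ≤ 2 := by linarith
  have hes_w : ρ / 2 - ρ / 800 + es k ≤ es (xm + k - z) := by
    have hth : t * es h ≤ ρ / 800 := by
      nlinarith [abs_le.mp heh.le, le_abs_self (es h)]
    simp only [hxm, map_add, map_sub, map_smul, smul_eq_mul, hee]
    linarith
  subst hlam hphim
  have hcombo := ContinuousLinearMap.le_smul_add_smul_apply (lam := 1 - ρ / 100) es _
    (by linarith) (by linarith) hes_w (mul_le_mul hg hw (norm_nonneg _) zero_le_two)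
  nlinarith [neg_abs_le (es k), abs_nonneg (es k)]

theorem statement9 {X : Type*} [NormedAddCommGroup X] [NormedSpace ℝ X] [CompleteSpace X]
    (ρ t : ℝ) (hρ0 : 0 < ρ) (hρ1 : ρ < 1 / 4) (ht0 : 0 < t) (ht1 : t < ρ / 16)
    (v e h : X) (hv : ‖v‖ = 1) (he : ‖e‖ = 1) (hh : ‖h‖ = 1)
    (vs es hs : X →L[ℝ] ℝ) (hvs : ‖vs‖ = 1) (hes : ‖es‖ = 1) (hhs : ‖hs‖ = 1)
    (hvv : vs v = 1) (hee : es e = 1) (hhh : hs h = 1) (heh : |es h| < ρ / 800)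
    (xp xm yp ym : X)
    (hxp : xp = (1 - ρ / 2) • e + t • h) (hxm : xm = (1 - ρ / 2) • e - t • h)
    (hyp : yp = xp + (ρ / 4) • v) (hym : ym = xm - (ρ / 4) • v)
    (lam : ℝ) (hlam : lam = 1 - ρ / 100)
    (phip phim : X →L[ℝ] ℝ)
    (hphip : phip = lam • es + (1 - lam) • (hs - (4 * t / ρ) • vs))
    (hphim : phim = lam • es + (1 - lam) • (-hs + (4 * t / ρ) • vs))
    (k : X) (hk : ‖k‖ ≤ 1) (z : X) (hz : ‖z‖ ≤ 1) (hez : es z ≤ 1 - ρ) :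
    phim (xm + k - z) ≥ ρ / 8 - |es k| :=
  statement9_general ρ t hρ0 hρ1 ht0 ht1 e h he hh vs es hs hvs hhs hee heh xm hxm lam hlam phim
    hphim k hk z hz hez
end

section
/- Let 0 < η < tρ/12800, and let |||·||| be a norm on X such that (X,|||·|||) is strictly convex, ‖x‖_α ≤ |||x||| ≤ (1 − ρ)⁻²‖x‖ for all x ∈ X, and |||y⁺_α||| ≤ 1 + η and |||y⁻_α||| ≤ 1 + η. Let K ⊆ X be a compact convex set contained in the closed unit ball of |||·|||, and suppose there exists v_K ∈ X with (ρ/4)|||v − v_K||| < η and with the segment [−(ρ/4)v_K, (ρ/4)v_K] contained in K. Suppose moreover that |e*(k)| < tρ/12800 and |h*(k)| < tρ/12800 for all k ∈ K. Then any nearest point map R onto K with respect to |||·||| satisfies |||x⁺_α − x⁻_α||| ≤ (1 − ρ)⁻²·2t and |||R(x⁺_α) − R(x⁻_α)||| ≥ ρ/16; in particular the modulus of continuity of R satisfies ω_R((1 − ρ)⁻²·2t) ≥ ρ/16. -/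
/-!
With `a = 4t + 6ρ`, `b = ρ²/2`, the functional `φ = a e* + b h* - ρt v*` is bounded by
`M = φ(x⁺) - ρ²t/6 > 0` on every generator of `B_α`: on the part of `B_X` outside the two caps
because `|e*| ≤ 1 - ρ` there, and at `±y⁺, ±y⁻` because `φ(v) ≈ -ρt` and `φ(h) ≈ ρ²/2`.
Hence `φ ≤ M · ‖·‖_α ≤ M · |||·|||`. Since `-(ρ/4)v_K ∈ K`, the nearest point `k = R(x⁺)`
satisfies `|||x⁺ - k||| ≤ |||y⁺||| + (ρ/4)|||v - v_K||| ≤ 1 + 2η`; as `e*` and `h*` are tiny on `K`,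
`φ(x⁺ - k) ≈ φ(x⁺) + ρt v*(k)`, which forces `v*(k) ≤ -ρ/8`. The same argument with
`h, v` replaced by `-h, -v` gives `v*(R x⁻) ≥ ρ/8`, so `|||R x⁺ - R x⁻||| ≥ ρ/4`.
-/

open Filter Topology Set

section Defs

variable {X : Type*} [AddCommGroup X] [Module ℝ X]

/-- `N` is a norm on the real vector space `X`. -/
def IsNorm (N : X → ℝ) : Prop :=
  (∀ x : X, N x = 0 ↔ x = 0) ∧
  (∀ (a : ℝ) (x : X), N (a • x) = |a| * N x) ∧
  (∀ x y : X, N (x + y) ≤ N x + N y)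

/-- `R` is a nearest point map onto `K` with respect to the norm `N`. -/
def IsNearestPointMap (N : X → ℝ) (K : Set X) (R : X → X) : Prop :=
  ∀ x : X, R x ∈ K ∧ N (x - R x) = sInf ((fun c => N (x - c)) '' K)

end Defs

open Metric

namespace IsNorm

variable {X : Type*} [AddCommGroup X] [Module ℝ X] {N : X → ℝ}

lemma map_neg (hN : IsNorm N) (x : X) : N (-x) = N x := by
  simpa using hN.2.1 (-1) x

lemma nonneg (hN : IsNorm N) (x : X) : 0 ≤ N x := by
  have h := hN.2.2 x (-x)
  rw [add_neg_cancel, (hN.1 0).2 rfl, hN.map_neg] at h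
  linarith

lemma sub_le (hN : IsNorm N) (x y : X) : N (x - y) ≤ N x + N y := by
  simpa [sub_eq_add_neg, hN.map_neg] using hN.2.2 x (-y)

lemma map_smul_of_nonneg (hN : IsNorm N) {a : ℝ} (ha : 0 ≤ a) (x : X) : N (a • x) = a * N x := by
  rw [hN.2.1, abs_of_nonneg ha]

end IsNorm

lemma IsNearestPointMap.le_of_mem {X : Type*} [AddCommGroup X] [Module ℝ X] {N : X → ℝ}
    {K : Set X} {R : X → X} (hR : IsNearestPointMap N K R) (hN : IsNorm N) (x : X) {c : X}
    (hc : c ∈ K) : N (x - R x) ≤ N (x - c) := by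
  rw [(hR x).2]
  exact csInf_le ⟨0, by rintro _ ⟨_, _, rfl⟩; exact hN.nonneg _⟩ ⟨c, hc, rfl⟩

lemma IsNearestPointMap.sub_le {X : Type*} [AddCommGroup X] [Module ℝ X] {N : X → ℝ}
    {K : Set X} {R : X → X} (hR : IsNearestPointMap N K R) (hN : IsNorm N) {c : X}
    (hc : c ∈ K) (x y : X) : N (x - R x) ≤ N y + N (x - c - y) := by
  simpa using (hR.le_of_mem hN x hc).trans (by simpa using hN.2.2 y (x - c - y))

section

variable {X : Type*} [NormedAddCommGroup X] [NormedSpace ℝ X]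

lemma norm_le_gauge_of_subset_closedBall {B : Set X} (hB : Absorbent ℝ B)
    (hB1 : B ⊆ closedBall 0 1) (x : X) : ‖x‖ ≤ gauge B x := by
  simpa [gauge_closedBall zero_le_one] using gauge_mono hB hB1 x

lemma ContinuousLinearMap.le_mul_gauge {B : Set X} (hB : Absorbent ℝ B) (f : X →L[ℝ] ℝ)
    {M : ℝ} (hM : 0 < M) (hfB : ∀ y ∈ B, f y ≤ M) (x : X) : f x ≤ M * gauge B x := by
  refine le_of_forall_gt_imp_ge_of_dense fun c hc => ?_
  obtain ⟨r, hr, hrc, y, hy, rfl⟩ := exists_lt_of_gauge_lt hB ((lt_div_iff₀' hM).2 hc)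
  calc f (r • y) = r * f y := by simp
    _ ≤ r * M := mul_le_mul_of_nonneg_left (hfB y hy) hr.le
    _ ≤ c := by rw [lt_div_iff₀ hM] at hrc; linarith

lemma ContinuousLinearMap.le_of_mem_closure_convexHull {G : Set X} (f : X →L[ℝ] ℝ) {M : ℝ}
    (hfG : ∀ y ∈ G, f y ≤ M) {y : X} (hy : y ∈ closure (convexHull ℝ G)) : f y ≤ M :=
  closure_minimal (convexHull_min hfG (convex_halfSpace_le f.isLinear M))
    (isClosed_le f.continuous continuous_const) hy

lemma ContinuousLinearMap.abs_apply_le_of_norm_le_one {f : X →L[ℝ] ℝ} (hf : ‖f‖ ≤ 1) (x : X) :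
    |f x| ≤ ‖x‖ := by
  simpa using (f.le_opNorm x).trans (mul_le_of_le_one_left (norm_nonneg x) hf)

lemma ContinuousLinearMap.abs_apply_lt_of_norm_sub_lt {f : X →L[ℝ] ℝ} (hf : ‖f‖ ≤ 1) {δ : ℝ}
    {v w : X} (hw : |f w| < δ) (hvw : ‖v - w‖ < δ) : |f v| < 2 * δ :=
  calc |f v| = |f (v - w) + f w| := by rw [← map_add, sub_add_cancel]
    _ ≤ ‖v - w‖ + |f w| := by grw [abs_add_le, f.abs_apply_le_of_norm_le_one hf (v - w)]
    _ < 2 * δ := by linarith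

lemma norm_smul_add_smul_add_smul_le (a b c : ℝ) {x y z : X} (hx : ‖x‖ ≤ 1) (hy : ‖y‖ ≤ 1)
    (hz : ‖z‖ ≤ 1) : ‖a • x + b • y + c • z‖ ≤ |a| + |b| + |c| := by
  refine (norm_add₃_le ..).trans ?_
  simp only [norm_smul, Real.norm_eq_abs]
  gcongr <;> exact mul_le_of_le_one_right (abs_nonneg _) ‹_›

lemma yp_ym_neg_subset_closedBall {ρ t : ℝ} (hρ1 : ρ < 1 / 4) (ht0 : 0 < t) (ht1 : t < ρ / 16)
    {e h v xp xm yp ym : X} (he : ‖e‖ ≤ 1) (hh : ‖h‖ ≤ 1) (hv : ‖v‖ ≤ 1)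
    (hxp : xp = (1 - ρ / 2) • e + t • h) (hxm : xm = (1 - ρ / 2) • e - t • h)
    (hyp : yp = xp + (ρ / 4) • v) (hym : ym = xm - (ρ / 4) • v) :
    ({yp, ym, -yp, -ym} : Set X) ⊆ closedBall 0 1 := by
  have hnorm (s u : ℝ) (hs : |s| = t) (hu : |u| = ρ / 4) :
      ‖(1 - ρ / 2) • e + s • h + u • v‖ ≤ 1 := by
    have := norm_smul_add_smul_add_smul_le (1 - ρ / 2) s u he hh hv
    rw [hs, hu, abs_of_pos (by linarith)] at this
    linarith
  have hyp1 : ‖yp‖ ≤ 1 := by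
    rw [hyp, hxp]
    exact hnorm _ _ (abs_of_pos ht0) (abs_of_pos (by linarith))
  have hym1 : ‖ym‖ ≤ 1 := by
    rw [hym, hxm, show (1 - ρ / 2) • e - t • h - (ρ / 4) • v =
      (1 - ρ / 2) • e + (-t) • h + (-(ρ / 4)) • v by module]
    exact hnorm _ _ (by rw [abs_neg, abs_of_pos ht0]) (by rw [abs_neg, abs_of_pos (by linarith)])
  simp [insert_subset_iff, hyp1, hym1]

lemma closedBall_diff_union_neg_image (f : X →L[ℝ] ℝ) (c : ℝ) :
    closedBall (0 : X) 1 \ ({x ∈ closedBall (0 : X) 1 | c < f x} ∪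
      Neg.neg '' {x ∈ closedBall (0 : X) 1 | c < f x}) = {z | ‖z‖ ≤ 1 ∧ |f z| ≤ c} := by
  ext z
  simp only [mem_closedBall, dist_zero_right, image_neg_eq_neg, neg_ofPred, norm_neg, map_neg,
    Set.mem_sdiff, mem_union, mem_ofPred_eq, not_or, not_and, not_lt, abs_le, and_congr_right_iff]
  intro hz
  simp only [hz, forall_const, neg_le]
  exact and_comm

lemma absorbent_closure_convexHull_union {f : X →L[ℝ] ℝ} (hf : ‖f‖ ≤ 1) {c : ℝ} (hc0 : 0 < c)
    (hc1 : c ≤ 1) (P : Set X) :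
    Absorbent ℝ (closure (convexHull ℝ ({z : X | ‖z‖ ≤ 1 ∧ |f z| ≤ c} ∪ P))) := by
  refine absorbent_nhds_zero (Filter.mem_of_superset (closedBall_mem_nhds 0 hc0) fun z hz => ?_)
  rw [mem_closedBall, dist_zero_right] at hz
  exact subset_closure (subset_convexHull ℝ _
    (Or.inl ⟨hz.trans hc1, (f.abs_apply_le_of_norm_le_one hf z).trans hz⟩))

lemma closure_convexHull_subset_closedBall {G : Set X} {r : ℝ} (hG : G ⊆ closedBall 0 r) :
    closure (convexHull ℝ G) ⊆ closedBall 0 r :=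
  closure_minimal (convexHull_min hG (convex_closedBall 0 r)) isClosed_closedBall

noncomputable def separatingFunctional (ρ t : ℝ) (es hs vs : X →L[ℝ] ℝ) : X →L[ℝ] ℝ :=
  (4 * t + 6 * ρ) • es + (ρ ^ 2 / 2) • hs - (ρ * t) • vs

section SeparatingFunctional

variable {ρ t : ℝ} {es hs vs : X →L[ℝ] ℝ}

@[simp]
lemma separatingFunctional_apply (x : X) : separatingFunctional ρ t es hs vs x =
    (4 * t + 6 * ρ) * es x + ρ ^ 2 / 2 * hs x - ρ * t * vs x := by
  simp [separatingFunctional]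

lemma separatingFunctional_apply_mem_Icc (hρ0 : 0 < ρ) (hρ1 : ρ < 1 / 4) (ht0 : 0 < t)
    (ht1 : t < ρ / 16) (hes : ‖es‖ ≤ 1) (hhs : ‖hs‖ ≤ 1) (hvs : ‖vs‖ ≤ 1) {x : X}
    (hx : ‖x‖ ≤ 1) (hesx : 1 - ρ / 2 - ρ * t / 800 ≤ es x) :
    separatingFunctional ρ t es hs vs x ∈ Icc (4 * ρ) (7 * ρ) := by
  obtain ⟨hes1, hes2⟩ := abs_le.1 ((es.abs_apply_le_of_norm_le_one hes x).trans hx)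
  obtain ⟨hhs1, hhs2⟩ := abs_le.1 ((hs.abs_apply_le_of_norm_le_one hhs x).trans hx)
  obtain ⟨hvs1, hvs2⟩ := abs_le.1 ((vs.abs_apply_le_of_norm_le_one hvs x).trans hx)
  rw [separatingFunctional_apply]
  constructor <;> nlinarith [mul_pos hρ0 ht0]

lemma separatingFunctional_add_sq_le (hρ0 : 0 < ρ) (hρ1 : ρ < 1 / 4) (ht0 : 0 < t)
    (ht1 : t < ρ / 16) (hhs : ‖hs‖ ≤ 1) (hvs : ‖vs‖ ≤ 1) {x z : X}
    (hx : ‖x‖ ≤ 1) (hesx : 1 - ρ / 2 - ρ * t / 800 ≤ es x) (hz : ‖z‖ ≤ 1)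
    (hesz : |es z| ≤ 1 - ρ) :
    separatingFunctional ρ t es hs vs z + ρ ^ 2 ≤ separatingFunctional ρ t es hs vs x := by
  obtain ⟨hhx1, -⟩ := abs_le.1 ((hs.abs_apply_le_of_norm_le_one hhs x).trans hx)
  obtain ⟨-, hvx2⟩ := abs_le.1 ((vs.abs_apply_le_of_norm_le_one hvs x).trans hx)
  obtain ⟨-, hhz2⟩ := abs_le.1 ((hs.abs_apply_le_of_norm_le_one hhs z).trans hz)
  obtain ⟨hvz1, -⟩ := abs_le.1 ((vs.abs_apply_le_of_norm_le_one hvs z).trans hz)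
  obtain ⟨-, hesz2⟩ := abs_le.1 hesz
  simp only [separatingFunctional_apply]
  nlinarith [mul_pos hρ0 ht0]

lemma abs_separatingFunctional_add_le (hρ0 : 0 < ρ) (hρ1 : ρ < 1 / 4) (ht0 : 0 < t)
    (ht1 : t < ρ / 16) {v : X} (hesv : |es v| ≤ t / 1600) (hhsv : |hs v| ≤ t / 1600)
    (hvv : vs v = 1) : |separatingFunctional ρ t es hs vs v + ρ * t| ≤ ρ * t / 100 := by
  obtain ⟨he1, he2⟩ := abs_le.1 hesv
  obtain ⟨hh1, hh2⟩ := abs_le.1 hhsv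
  rw [separatingFunctional_apply, hvv, abs_le]
  constructor <;> nlinarith [mul_pos hρ0 ht0]

lemma separatingFunctional_apply_mem_Icc_of_apply_eq_one (hρ0 : 0 < ρ) (hρ1 : ρ < 1 / 4)
    (ht0 : 0 < t) (ht1 : t < ρ / 16) (hvs : ‖vs‖ ≤ 1) {h : X} (hh : ‖h‖ ≤ 1)
    (hesh : |es h| ≤ ρ / 800) (hhh : hs h = 1) :
    separatingFunctional ρ t es hs vs h ∈ Icc (ρ ^ 2 / 3) ρ := by
  obtain ⟨he1, he2⟩ := abs_le.1 hesh
  obtain ⟨hv1, hv2⟩ := abs_le.1 ((vs.abs_apply_le_of_norm_le_one hvs h).trans hh)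
  rw [separatingFunctional_apply, hhh]
  constructor <;> nlinarith [mul_pos hρ0 ht0]

lemma ContinuousLinearMap.le_of_mem_generators {ρ t : ℝ} {es f : X →L[ℝ] ℝ}
    (hρ0 : 0 < ρ) (ht0 : 0 < t) (ht1 : t < ρ / 16) {x h v yp ym : X}
    (hfx : 4 * ρ ≤ f x) (hball : ∀ z : X, ‖z‖ ≤ 1 → |es z| ≤ 1 - ρ → f z + ρ ^ 2 ≤ f x)
    (hfv : |f v + ρ * t| ≤ ρ * t / 100) (hfh : f h ∈ Icc (ρ ^ 2 / 3) ρ)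
    (hyp : yp = x + (ρ / 4) • v) (hym : ym = x - (2 * t) • h - (ρ / 4) • v) :
    ∀ g ∈ {z : X | ‖z‖ ≤ 1 ∧ |es z| ≤ 1 - ρ} ∪ {yp, ym, -yp, -ym},
      f g ≤ f x - ρ ^ 2 * t / 6 := by
  have hfyp : f yp = f x + ρ / 4 * f v := by simp [hyp]
  have hfym : f ym = f x - 2 * t * f h - ρ / 4 * f v := by simp [hym]
  obtain ⟨hfv1, hfv2⟩ := abs_le.1 hfv
  obtain ⟨hfh1, hfh2⟩ := hfh
  have hρt := mul_pos hρ0 ht0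
  rintro g (⟨hg, hesg⟩ | hg)
  · nlinarith [hball g hg hesg]
  · simp only [mem_insert_iff, mem_singleton_iff] at hg
    rcases hg with rfl | rfl | rfl | rfl <;> simp only [map_neg, hfyp, hfym] <;> nlinarith

end SeparatingFunctional

theorem apply_le_neg_of_gauge_sub_lt {ρ t : ℝ} (hρ0 : 0 < ρ) (hρ1 : ρ < 1 / 4) (ht0 : 0 < t)
    (ht1 : t < ρ / 16) {e h v xp yp ym : X} (he : ‖e‖ ≤ 1) (hh : ‖h‖ ≤ 1)
    {es hs vs : X →L[ℝ] ℝ} (hes : ‖es‖ ≤ 1) (hhs : ‖hs‖ ≤ 1) (hvs : ‖vs‖ ≤ 1)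
    (hee : es e = 1) (hhh : hs h = 1) (hvv : vs v = 1) (heh : |es h| < ρ / 800)
    (hesv : |es v| ≤ t / 1600) (hhsv : |hs v| ≤ t / 1600)
    (hxp : xp = (1 - ρ / 2) • e + t • h) (hyp : yp = xp + (ρ / 4) • v)
    (hym : ym = xp - (2 * t) • h - (ρ / 4) • v) {B : Set X} (hBabs : Absorbent ℝ B)
    (hB : B ⊆ closure (convexHull ℝ ({z : X | ‖z‖ ≤ 1 ∧ |es z| ≤ 1 - ρ} ∪ {yp, ym, -yp, -ym})))
    {k : X} (hesk : |es k| < t * ρ / 12800) (hhsk : |hs k| < t * ρ / 12800)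
    (hk : gauge B (xp - k) < 1 + t * ρ / 6400) :
    vs k ≤ -(ρ / 8) := by
  set F := separatingFunctional ρ t es hs vs
  have hxp1 : ‖xp‖ ≤ 1 := by
    calc ‖xp‖ ≤ (1 - ρ / 2) * ‖e‖ + t * ‖h‖ := by
          rw [hxp]
          refine (norm_add_le _ _).trans_eq ?_
          rw [norm_smul, norm_smul, Real.norm_of_nonneg (by linarith), Real.norm_of_nonneg ht0.le]
      _ ≤ 1 := by nlinarith
  have hesxp : 1 - ρ / 2 - ρ * t / 800 ≤ es xp := by
    have : es xp = 1 - ρ / 2 + t * es h := by simp [hxp, hee]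
    nlinarith [(abs_lt.1 heh).1]
  have hFx : F xp ∈ Icc (4 * ρ) (7 * ρ) :=
    separatingFunctional_apply_mem_Icc hρ0 hρ1 ht0 ht1 hes hhs hvs hxp1 hesxp
  have hFB : ∀ y ∈ B, F y ≤ F xp - ρ ^ 2 * t / 6 := fun y hy =>
    F.le_of_mem_closure_convexHull (F.le_of_mem_generators (es := es) hρ0 ht0 ht1 hFx.1
      (fun z hz hesz => separatingFunctional_add_sq_le hρ0 hρ1 ht0 ht1 hhs hvs hxp1 hesxp hz hesz)
      (abs_separatingFunctional_add_le hρ0 hρ1 ht0 ht1 hesv hhsv hvv)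
      (separatingFunctional_apply_mem_Icc_of_apply_eq_one hρ0 hρ1 ht0 ht1 hvs hh heh.le hhh)
      hyp hym) (hB hy)
  have hρt := mul_pos hρ0 ht0
  have hM : 0 < F xp - ρ ^ 2 * t / 6 := by nlinarith [hFx.1]
  have hFxk : F xp - F k ≤ (F xp - ρ ^ 2 * t / 6) * (1 + t * ρ / 6400) := by
    rw [← map_sub]
    exact (F.le_mul_gauge hBabs hM hFB (xp - k)).trans (mul_le_mul_of_nonneg_left hk.le hM.le)
  have hFk : F k = (4 * t + 6 * ρ) * es k + ρ ^ 2 / 2 * hs k - ρ * t * vs k :=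
    separatingFunctional_apply k
  obtain ⟨-, hesk⟩ := abs_lt.1 hesk
  obtain ⟨-, hhsk⟩ := abs_lt.1 hhsk
  refine le_of_mul_le_mul_left ?_ hρt
  nlinarith [mul_le_mul_of_nonneg_right hFx.2 (by positivity : 0 ≤ t * ρ / 6400),
    mul_le_mul_of_nonneg_left hesk.le (by positivity : 0 ≤ 4 * t + 6 * ρ),
    mul_le_mul_of_nonneg_left hhsk.le (by positivity : 0 ≤ ρ ^ 2 / 2),
    mul_lt_mul_of_pos_left ht1 hρt, mul_pos hρt hρt, mul_pos (mul_pos hρt hρt) hρ0]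

theorem apply_nearestPoint_le_neg {ρ t η : ℝ} (hρ0 : 0 < ρ) (hρ1 : ρ < 1 / 4) (ht0 : 0 < t)
    (ht1 : t < ρ / 16) (hη1 : η < t * ρ / 12800) {e h v xp yp ym : X} (he : ‖e‖ ≤ 1)
    (hh : ‖h‖ ≤ 1) {es hs vs : X →L[ℝ] ℝ} (hes : ‖es‖ ≤ 1) (hhs : ‖hs‖ ≤ 1) (hvs : ‖vs‖ ≤ 1)
    (hee : es e = 1) (hhh : hs h = 1) (hvv : vs v = 1) (heh : |es h| < ρ / 800)
    (hxp : xp = (1 - ρ / 2) • e + t • h) (hyp : yp = xp + (ρ / 4) • v)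
    (hym : ym = xp - (2 * t) • h - (ρ / 4) • v) {B : Set X} (hBabs : Absorbent ℝ B)
    (hB : B ⊆ closure (convexHull ℝ ({z : X | ‖z‖ ≤ 1 ∧ |es z| ≤ 1 - ρ} ∪ {yp, ym, -yp, -ym})))
    {N : X → ℝ} (hN : IsNorm N) (hnormN : ∀ x, ‖x‖ ≤ N x) (hgaugeN : ∀ x, gauge B x ≤ N x)
    (hNyp : N yp ≤ 1 + η) {K : Set X} {vK : X} (hvK : ρ / 4 * N (v - vK) < η)
    (hvKK : -((ρ / 4) • vK) ∈ K) (hKe : ∀ k ∈ K, |es k| < t * ρ / 12800)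
    (hKh : ∀ k ∈ K, |hs k| < t * ρ / 12800) {R : X → X} (hR : IsNearestPointMap N K R) :
    vs (R xp) ≤ -(ρ / 8) := by
  have hρ4 : 0 < ρ / 4 := by positivity
  have hclose : ‖v - vK‖ < t / 3200 := by nlinarith [hnormN (v - vK)]
  have hsmall (f : X →L[ℝ] ℝ) (hf : ∀ k ∈ K, |f k| < t * ρ / 12800) : |f vK| < t / 3200 := by
    have := hf _ hvKK
    rw [map_neg, abs_neg, map_smul, smul_eq_mul, abs_mul, abs_of_pos hρ4] at this
    nlinarith
  have hdist : N (xp - R xp) < 1 + t * ρ / 6400 := by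
    have hsub := hR.sub_le hN hvKK xp yp
    rw [show xp - -((ρ / 4) • vK) - yp = -((ρ / 4) • (v - vK)) by rw [hyp]; module,
      hN.map_neg, hN.map_smul_of_nonneg hρ4.le] at hsub
    linarith
  refine apply_le_neg_of_gauge_sub_lt hρ0 hρ1 ht0 ht1 he hh hes hhs hvs hee hhh hvv heh ?_ ?_
    hxp hyp hym hBabs hB (hKe _ (hR xp).1) (hKh _ (hR xp).1) ((hgaugeN _).trans_lt hdist)
  · have := es.abs_apply_lt_of_norm_sub_lt hes (hsmall es hKe) hclose; linarith
  · have := hs.abs_apply_lt_of_norm_sub_lt hhs (hsmall hs hKh) hclose; linarith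

theorem quarter_le_apply_nearestPoint_sub {ρ t η : ℝ} (hρ0 : 0 < ρ) (hρ1 : ρ < 1 / 4)
    (ht0 : 0 < t) (ht1 : t < ρ / 16) (hη1 : η < t * ρ / 12800) {e h v : X} (he : ‖e‖ ≤ 1)
    (hh : ‖h‖ ≤ 1) {es hs vs : X →L[ℝ] ℝ} (hes : ‖es‖ ≤ 1) (hhs : ‖hs‖ ≤ 1) (hvs : ‖vs‖ ≤ 1)
    (hee : es e = 1) (hhh : hs h = 1) (hvv : vs v = 1) (heh : |es h| < ρ / 800)
    {xp xm yp ym : X} (hxp : xp = (1 - ρ / 2) • e + t • h) (hxm : xm = (1 - ρ / 2) • e - t • h)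
    (hyp : yp = xp + (ρ / 4) • v) (hym : ym = xm - (ρ / 4) • v) {B : Set X}
    (hBabs : Absorbent ℝ B)
    (hB : B ⊆ closure (convexHull ℝ ({z : X | ‖z‖ ≤ 1 ∧ |es z| ≤ 1 - ρ} ∪ {yp, ym, -yp, -ym})))
    {N : X → ℝ} (hN : IsNorm N) (hnormN : ∀ x, ‖x‖ ≤ N x) (hgaugeN : ∀ x, gauge B x ≤ N x)
    (hNyp : N yp ≤ 1 + η) (hNym : N ym ≤ 1 + η) {K : Set X} {vK : X}
    (hvK : ρ / 4 * N (v - vK) < η) (hseg : segment ℝ (-((ρ / 4) • vK)) ((ρ / 4) • vK) ⊆ K)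
    (hKe : ∀ k ∈ K, |es k| < t * ρ / 12800) (hKh : ∀ k ∈ K, |hs k| < t * ρ / 12800)
    {R : X → X} (hR : IsNearestPointMap N K R) :
    ρ / 4 ≤ vs (R xm - R xp) := by
  have hp := apply_nearestPoint_le_neg hρ0 hρ1 ht0 ht1 hη1 he hh hes hhs hvs hee hhh hvv heh
    hxp hyp (by rw [hym, hxm, hxp]; module) hBabs hB hN hnormN hgaugeN hNyp hvK
    (hseg (left_mem_segment ℝ _ _)) hKe hKh hR
  -- the same estimate at `xm`, after the change of signs `h ↦ -h`, `v ↦ -v`, `vK ↦ -vK`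
  have hm := apply_nearestPoint_le_neg (h := -h) (v := -v) (hs := -hs) (vs := -vs) (vK := -vK)
    (xp := xm) (yp := ym) (ym := yp)
    hρ0 hρ1 ht0 ht1 hη1 he (by rwa [norm_neg]) hes (by rwa [norm_neg]) (by rwa [norm_neg]) hee
    (by simpa) (by simpa) (by simpa) (by rw [hxm]; module) (by rw [hym]; module)
    (by rw [hyp, hxp, hxm]; module) hBabs ?_ hN hnormN hgaugeN hNym
    (by rwa [neg_sub_neg, ← neg_sub, hN.map_neg]) (by simpa using hseg (right_mem_segment ℝ _ _))
    hKe (by simpa using hKh) hR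
  · rw [neg_apply] at hm
    rw [map_sub]
    linarith
  · convert hB using 4
    ext
    simp only [mem_insert_iff, mem_singleton_iff]
    tauto

end

theorem statement10_general {X : Type*} [NormedAddCommGroup X] [NormedSpace ℝ X]
    (ρ t : ℝ) (hρ0 : 0 < ρ) (hρ1 : ρ < 1 / 4) (ht0 : 0 < t) (ht1 : t < ρ / 16)
    (v e h : X) (hv : ‖v‖ = 1) (he : ‖e‖ = 1) (hh : ‖h‖ = 1)
    (vs es hs : X →L[ℝ] ℝ) (hvs : ‖vs‖ = 1) (hes : ‖es‖ = 1) (hhs : ‖hs‖ = 1)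
    (hvv : vs v = 1) (hee : es e = 1) (hhh : hs h = 1) (heh : |es h| < ρ / 800)
    (xp xm yp ym : X)
    (hxp : xp = (1 - ρ / 2) • e + t • h) (hxm : xm = (1 - ρ / 2) • e - t • h)
    (hyp : yp = xp + (ρ / 4) • v) (hym : ym = xm - (ρ / 4) • v)
    (BX SA BA : Set X)
    (hBX : BX = Metric.closedBall (0 : X) 1)
    (hSA : SA = {x ∈ BX | 1 - ρ < es x})
    (hBA : BA = closure (convexHull ℝ ((BX \ (SA ∪ Neg.neg '' SA)) ∪ {yp, ym, -yp, -ym})))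
    (η : ℝ) (hη1 : η < t * ρ / 12800)
    (N : X → ℝ) (hNnorm : IsNorm N)
    (hN1 : ∀ x : X, gauge BA x ≤ N x) (hN2 : ∀ x : X, N x ≤ ((1 - ρ) ^ 2)⁻¹ * ‖x‖)
    (hNyp : N yp ≤ 1 + η) (hNym : N ym ≤ 1 + η)
    (K : Set X) (hKB : K ⊆ {x : X | N x ≤ 1})
    (vK : X) (hvK : ρ / 4 * N (v - vK) < η)
    (hseg : segment ℝ (-((ρ / 4) • vK)) ((ρ / 4) • vK) ⊆ K)
    (hKe : ∀ k ∈ K, |es k| < t * ρ / 12800) (hKh : ∀ k ∈ K, |hs k| < t * ρ / 12800)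
    (R : X → X) (hR : IsNearestPointMap N K R)
    :
    N (xp - xm) ≤ ((1 - ρ) ^ 2)⁻¹ * (2 * t) ∧
    ρ / 16 ≤ N (R xp - R xm) ∧
    ρ / 16 ≤ sSup {d : ℝ | ∃ x y : X, N (x - y) ≤ ((1 - ρ) ^ 2)⁻¹ * (2 * t) ∧ d = N (R x - R y)} := by
  have hBA' : BA = closure (convexHull ℝ
      ({z : X | ‖z‖ ≤ 1 ∧ |es z| ≤ 1 - ρ} ∪ {yp, ym, -yp, -ym})) := by
    rw [hBA, hSA, hBX, closedBall_diff_union_neg_image]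
  have hBAabs : Absorbent ℝ BA :=
    hBA' ▸ absorbent_closure_convexHull_union hes.le (by linarith) (by linarith) _
  have hBA1 : BA ⊆ closedBall 0 1 := hBA' ▸ closure_convexHull_subset_closedBall
    (union_subset (fun z hz => by simpa using hz.1)
      (yp_ym_neg_subset_closedBall hρ1 ht0 ht1 he.le hh.le hv.le hxp hxm hyp hym))
  have hnormN (x : X) : ‖x‖ ≤ N x :=
    (norm_le_gauge_of_subset_closedBall hBAabs hBA1 x).trans (hN1 x)
  have hsep := quarter_le_apply_nearestPoint_sub hρ0 hρ1 ht0 ht1 hη1 he.le hh.le hes.le hhs.le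
    hvs.le hee hhh hvv heh hxp hxm hyp hym hBAabs hBA'.subset hNnorm hnormN hN1 hNyp hNym hvK hseg
    hKe hKh hR
  have hdist : N (xp - xm) ≤ ((1 - ρ) ^ 2)⁻¹ * (2 * t) := by
    have : ‖xp - xm‖ = 2 * t := by
      rw [hxp, hxm,
        show (1 - ρ / 2) • e + t • h - ((1 - ρ / 2) • e - t • h) = (2 * t) • h by module,
        norm_smul, hh, Real.norm_of_nonneg (by linarith), mul_one]
    simpa [this] using hN2 (xp - xm)
  have hRsep : ρ / 16 ≤ N (R xp - R xm) :=
    calc ρ / 16 ≤ vs (R xm - R xp) := by linarith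
      _ ≤ ‖R xm - R xp‖ := (le_abs_self _).trans (vs.abs_apply_le_of_norm_le_one hvs.le _)
      _ ≤ N (R xm - R xp) := hnormN _
      _ = N (R xp - R xm) := by simpa using hNnorm.map_neg (R xp - R xm)
  refine ⟨hdist, hRsep, hRsep.trans (le_csSup ⟨2, ?_⟩ ⟨xp, xm, hdist, rfl⟩)⟩
  rintro _ ⟨x, y, -, rfl⟩
  have hx : N (R x) ≤ 1 := hKB (hR x).1
  have hy : N (R y) ≤ 1 := hKB (hR y).1
  linarith [hNnorm.sub_le (R x) (R y)]

theorem statement10 {X : Type*} [NormedAddCommGroup X] [NormedSpace ℝ X] [CompleteSpace X]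
    (ρ t : ℝ) (hρ0 : 0 < ρ) (hρ1 : ρ < 1 / 4) (ht0 : 0 < t) (ht1 : t < ρ / 16)
    (v e h : X) (hv : ‖v‖ = 1) (he : ‖e‖ = 1) (hh : ‖h‖ = 1)
    (vs es hs : X →L[ℝ] ℝ) (hvs : ‖vs‖ = 1) (hes : ‖es‖ = 1) (hhs : ‖hs‖ = 1)
    (hvv : vs v = 1) (hee : es e = 1) (hhh : hs h = 1) (heh : |es h| < ρ / 800)
    (xp xm yp ym : X)
    (hxp : xp = (1 - ρ / 2) • e + t • h) (hxm : xm = (1 - ρ / 2) • e - t • h)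
    (hyp : yp = xp + (ρ / 4) • v) (hym : ym = xm - (ρ / 4) • v)
    (BX SA BA : Set X)
    (hBX : BX = Metric.closedBall (0 : X) 1)
    (hSA : SA = {x ∈ BX | 1 - ρ < es x})
    (hBA : BA = closure (convexHull ℝ ((BX \ (SA ∪ Neg.neg '' SA)) ∪ {yp, ym, -yp, -ym})))
    (η : ℝ) (hη0 : 0 < η) (hη1 : η < t * ρ / 12800)
    (N : X → ℝ) (hNnorm : IsNorm N)
    (hNsc : ∀ x y : X, N x = 1 → N y = 1 → N ((2 : ℝ)⁻¹ • (x + y)) = 1 → x = y)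
    (hN1 : ∀ x : X, gauge BA x ≤ N x) (hN2 : ∀ x : X, N x ≤ ((1 - ρ) ^ 2)⁻¹ * ‖x‖)
    (hNyp : N yp ≤ 1 + η) (hNym : N ym ≤ 1 + η)
    (K : Set X) (hKc : IsCompact K) (hKconv : Convex ℝ K) (hKB : K ⊆ {x : X | N x ≤ 1})
    (vK : X) (hvK : ρ / 4 * N (v - vK) < η)
    (hseg : segment ℝ (-((ρ / 4) • vK)) ((ρ / 4) • vK) ⊆ K)
    (hKe : ∀ k ∈ K, |es k| < t * ρ / 12800) (hKh : ∀ k ∈ K, |hs k| < t * ρ / 12800)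
    (R : X → X) (hR : IsNearestPointMap N K R)
    :
    N (xp - xm) ≤ ((1 - ρ) ^ 2)⁻¹ * (2 * t) ∧
    ρ / 16 ≤ N (R xp - R xm) ∧
    ρ / 16 ≤ sSup {d : ℝ | ∃ x y : X, N (x - y) ≤ ((1 - ρ) ^ 2)⁻¹ * (2 * t) ∧ d = N (R x - R y)} :=
  statement10_general ρ t hρ0 hρ1 ht0 ht1 v e h hv he hh vs es hs hvs hes hhs hvv hee hhh heh xp xm
    yp ym hxp hxm hyp hym BX SA BA hBX hSA hBA η hη1 N hNnorm hN1 hN2 hNyp hNym K hKB vK hvK hseg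
    hKe hKh R hR
end

section
/- The set B_α satisfies (1 − ρ)·B_X ⊆ B_α ⊆ B_X; consequently its Minkowski functional ‖·‖_α is a norm on X equivalent to ‖·‖, and ‖x‖ ≤ ‖x‖_α ≤ (1 − ρ)⁻¹‖x‖ for all x ∈ X. -/
/-!
Every point of the original ball outside the two slabs `±S_α` stays in the generating set, and
the slabs lie outside the ball of radius `1 - ρ` because `‖e*‖ = 1`; hence
`(1 - ρ) • B_X ⊆ B_α`. The four new points `±y±_α` have norm at most
`(1 - ρ/2) + t + ρ/4 ≤ 1`, so `B_α ⊆ B_X`. The set `B_α` is closed, convex and symmetric, and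
sandwiched between two balls, so its gauge is a norm squeezed between `‖·‖` and
`(1 - ρ)⁻¹ ‖·‖`.
-/

open Filter Topology Set Pointwise

open Metric

section Gauge

variable {X : Type*} [NormedAddCommGroup X] [NormedSpace ℝ X] {B : Set X} {r R : ℝ}

lemma absorbent_of_closedBall_subset (hr : 0 < r) (h : closedBall (0 : X) r ⊆ B) :
    Absorbent ℝ B :=
  (absorbent_ball_zero hr).mono (ball_subset_closedBall.trans h)

lemma gauge_le_inv_mul_norm_of_closedBall_subset (hr : 0 < r) (h : closedBall (0 : X) r ⊆ B)
    (x : X) : gauge B x ≤ r⁻¹ * ‖x‖ := by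
  have := gauge_mono (absorbent_of_closedBall_subset hr le_rfl) h x
  rwa [gauge_closedBall hr.le, div_eq_inv_mul] at this

lemma norm_le_mul_gauge_of_subset_closedBall (hR : 0 < R) (habs : Absorbent ℝ B)
    (h : B ⊆ closedBall (0 : X) R) (x : X) : ‖x‖ ≤ R * gauge B x := by
  have := gauge_mono habs h x
  rw [gauge_closedBall hR.le] at this
  rwa [div_le_iff₀' hR] at this

lemma isNorm_gauge (hconv : Convex ℝ B) (hsymm : ∀ x ∈ B, -x ∈ B) (hr : 0 < r)
    (hrB : closedBall (0 : X) r ⊆ B) (hR : 0 < R) (hBR : B ⊆ closedBall (0 : X) R) :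
    IsNorm (gauge B) := by
  have habs := absorbent_of_closedBall_subset hr hrB
  refine ⟨fun x => ⟨fun hx => ?_, fun hx => hx ▸ gauge_zero⟩, fun a x => ?_,
    gauge_add_le hconv habs⟩
  · have := norm_le_mul_gauge_of_subset_closedBall hR habs hBR x
    rw [hx, mul_zero] at this
    exact norm_le_zero_iff.mp this
  · rw [gauge_smul ((balanced_iff_neg_mem hconv).mpr fun x hx => hsymm x hx), Real.norm_eq_abs]

end Gauge

lemma neg_mem_closure_convexHull {E : Type*} [AddCommGroup E] [Module ℝ E] [TopologicalSpace E]
    [ContinuousNeg E] {G : Set E} (hG : ∀ x ∈ G, -x ∈ G) :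
    ∀ x ∈ closure (convexHull ℝ G), -x ∈ closure (convexHull ℝ G) := by
  have hneg : -G ⊆ G := fun x hx => by simpa using hG (-x) hx
  have : -closure (convexHull ℝ G) ⊆ closure (convexHull ℝ G) := by
    rw [neg_closure, ← convexHull_neg]
    exact closure_mono (convexHull_mono hneg)
  exact fun x hx => this (by rwa [Set.mem_neg, neg_neg])

lemma neg_mem_diff_union_insert {α : Type*} [InvolutiveNeg α] {A S : Set α}
    (hA : ∀ x ∈ A, -x ∈ A) (a b : α) :
    ∀ x ∈ A \ (S ∪ Neg.neg '' S) ∪ {a, b, -a, -b},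
      -x ∈ A \ (S ∪ Neg.neg '' S) ∪ {a, b, -a, -b} := by
  rintro x (⟨hxA, hxS⟩ | hx)
  · exact Or.inl ⟨hA x hxA, by simpa [or_comm] using hxS⟩
  · right
    simp only [mem_insert_iff, mem_singleton_iff] at hx ⊢
    rcases hx with rfl | rfl | rfl | rfl <;> simp

section Construction

variable {X : Type*} [NormedAddCommGroup X] [NormedSpace ℝ X]

lemma closedBall_subset_diff_slabs (f : X →L[ℝ] ℝ) (hf : ‖f‖ ≤ 1) (ρ : ℝ) (hρ : 0 ≤ ρ) :
    closedBall (0 : X) (1 - ρ) ⊆ closedBall 0 1 \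
      ({x ∈ closedBall 0 1 | 1 - ρ < f x} ∪ Neg.neg '' {x ∈ closedBall 0 1 | 1 - ρ < f x}) := by
  intro x hx
  rw [mem_closedBall_zero_iff] at hx
  have hfx : |f x| ≤ 1 - ρ := calc
    |f x| ≤ ‖f‖ * ‖x‖ := f.le_opNorm x
    _ ≤ 1 * (1 - ρ) := mul_le_mul hf hx (norm_nonneg x) zero_le_one
    _ = 1 - ρ := one_mul _
  refine ⟨mem_closedBall_zero_iff.mpr (by linarith), ?_⟩
  simp only [image_neg_eq_neg, mem_union, Set.mem_neg, mem_ofPred_eq, map_neg, not_or, not_and,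
    not_lt]
  exact ⟨fun _ => (le_abs_self _).trans hfx, fun _ => (neg_le_abs _).trans hfx⟩

lemma norm_smul_add_smul_add_smul_le_s12 {e h v : X} (he : ‖e‖ = 1) (hh : ‖h‖ = 1) (hv : ‖v‖ = 1)
    (a b c : ℝ) : ‖a • e + b • h + c • v‖ ≤ |a| + |b| + |c| := by
  simpa [norm_smul, he, hh, hv] using norm_add₃_le (a := a • e) (b := b • h) (c := c • v)

lemma norm_perturbed_points_le_one {e h v : X} (he : ‖e‖ = 1) (hh : ‖h‖ = 1) (hv : ‖v‖ = 1)
    {ρ t : ℝ} (hρ0 : 0 < ρ) (hρ1 : ρ < 1) (ht0 : 0 < t) (ht1 : t < ρ / 4) :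
    ‖(1 - ρ / 2) • e + t • h + (ρ / 4) • v‖ ≤ 1 ∧ ‖(1 - ρ / 2) • e - t • h - (ρ / 4) • v‖ ≤ 1 := by
  have hcoeffs : |1 - ρ / 2| + |t| + |ρ / 4| ≤ 1 := by
    rw [abs_of_pos ht0, abs_of_pos (by linarith : 0 < 1 - ρ / 2),
      abs_of_pos (div_pos hρ0 four_pos)]
    linarith
  refine ⟨(norm_smul_add_smul_add_smul_le_s12 he hh hv _ _ _).trans hcoeffs, ?_⟩
  rw [sub_eq_add_neg, sub_eq_add_neg, ← neg_smul, ← neg_smul]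
  refine (norm_smul_add_smul_add_smul_le_s12 he hh hv _ _ _).trans ?_
  rwa [abs_neg, abs_neg]

end Construction

theorem statement12_general {X : Type*} [NormedAddCommGroup X] [NormedSpace ℝ X]
    (ρ t : ℝ) (hρ0 : 0 < ρ) (hρ1 : ρ < 1 / 4) (ht0 : 0 < t) (ht1 : t < ρ / 16)
    (v e h : X) (hv : ‖v‖ = 1) (he : ‖e‖ = 1) (hh : ‖h‖ = 1)
    (es : X →L[ℝ] ℝ) (hes : ‖es‖ = 1)
    (xp xm yp ym : X)
    (hxp : xp = (1 - ρ / 2) • e + t • h) (hxm : xm = (1 - ρ / 2) • e - t • h)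
    (hyp : yp = xp + (ρ / 4) • v) (hym : ym = xm - (ρ / 4) • v)
    (BX SA BA : Set X)
    (hBX : BX = Metric.closedBall (0 : X) 1)
    (hSA : SA = {x ∈ BX | 1 - ρ < es x})
    (hBA : BA = closure (convexHull ℝ ((BX \ (SA ∪ Neg.neg '' SA)) ∪ {yp, ym, -yp, -ym})))
    :
    (1 - ρ) • BX ⊆ BA ∧ BA ⊆ BX ∧
    IsNorm (gauge BA) ∧
    ∀ x : X, ‖x‖ ≤ gauge BA x ∧ gauge BA x ≤ (1 - ρ)⁻¹ * ‖x‖ := by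
  subst hBX hSA
  have hρ : 0 < 1 - ρ := by linarith
  have hsmul : (1 - ρ) • closedBall (0 : X) 1 = closedBall 0 (1 - ρ) := by
    rw [_root_.smul_closedBall _ _ zero_le_one, smul_zero, Real.norm_eq_abs, abs_of_pos hρ,
      mul_one]
  obtain ⟨hyp_norm, hym_norm⟩ :=
    norm_perturbed_points_le_one he hh hv hρ0 (by linarith) ht0 (by linarith)
  rw [← hxp, ← hyp] at hyp_norm
  rw [← hxm, ← hym] at hym_norm
  have hball : closedBall 0 (1 - ρ) ⊆ BA := by
    rw [hBA]
    exact (closedBall_subset_diff_slabs es hes.le ρ hρ0.le).trans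
      (subset_union_left.trans (subset_convexHull ℝ _) |>.trans subset_closure)
  have houter : BA ⊆ closedBall 0 1 := by
    rw [hBA]
    refine closure_minimal (convexHull_min (union_subset sdiff_subset ?_) (convex_closedBall 0 1))
      isClosed_closedBall
    simp only [insert_subset_iff, singleton_subset_iff, mem_closedBall_zero_iff, norm_neg]
    exact ⟨hyp_norm, hym_norm, hyp_norm, hym_norm⟩
  have hsymm : ∀ x ∈ BA, -x ∈ BA := by
    rw [hBA]
    exact neg_mem_closure_convexHull (neg_mem_diff_union_insert (by simp) yp ym)
  have hconv : Convex ℝ BA := hBA ▸ (convex_convexHull ℝ _).closure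
  refine ⟨hsmul ▸ hball, houter, isNorm_gauge hconv hsymm hρ hball one_pos houter,
    fun x => ⟨?_, gauge_le_inv_mul_norm_of_closedBall_subset hρ hball x⟩⟩
  simpa using norm_le_mul_gauge_of_subset_closedBall one_pos
    (absorbent_of_closedBall_subset hρ hball) houter x

theorem statement12 {X : Type*} [NormedAddCommGroup X] [NormedSpace ℝ X] [CompleteSpace X]
    (ρ t : ℝ) (hρ0 : 0 < ρ) (hρ1 : ρ < 1 / 4) (ht0 : 0 < t) (ht1 : t < ρ / 16)
    (v e h : X) (hv : ‖v‖ = 1) (he : ‖e‖ = 1) (hh : ‖h‖ = 1)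
    (vs es hs : X →L[ℝ] ℝ) (hvs : ‖vs‖ = 1) (hes : ‖es‖ = 1) (hhs : ‖hs‖ = 1)
    (hvv : vs v = 1) (hee : es e = 1) (hhh : hs h = 1) (heh : |es h| < ρ / 800)
    (xp xm yp ym : X)
    (hxp : xp = (1 - ρ / 2) • e + t • h) (hxm : xm = (1 - ρ / 2) • e - t • h)
    (hyp : yp = xp + (ρ / 4) • v) (hym : ym = xm - (ρ / 4) • v)
    (BX SA BA : Set X)
    (hBX : BX = Metric.closedBall (0 : X) 1)
    (hSA : SA = {x ∈ BX | 1 - ρ < es x})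
    (hBA : BA = closure (convexHull ℝ ((BX \ (SA ∪ Neg.neg '' SA)) ∪ {yp, ym, -yp, -ym})))
    :
    (1 - ρ) • BX ⊆ BA ∧ BA ⊆ BX ∧
    IsNorm (gauge BA) ∧
    ∀ x : X, ‖x‖ ≤ gauge BA x ∧ gauge BA x ≤ (1 - ρ)⁻¹ * ‖x‖ :=
  statement12_general ρ t hρ0 hρ1 ht0 ht1 v e h hv he hh es hes xp xm yp ym hxp hxm hyp hym BX SA BA
    hBX hSA hBA
end

section
/- For every w ∈ X with |e*(w)| ≤ (1 − ρ)‖w‖, it holds that ‖w‖_α = ‖w‖. In particular, if ‖w‖ = 1 and |e*(w)| ≤ 1 − ρ, then ‖w‖_α = 1. -/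
/-!
The ball `B_α` is squeezed between the slab `{‖x‖ ≤ 1, |e*(x)| ≤ 1 - ρ}`, which lies in the part of
`B_X` that is kept, and `B_X` itself, since the added points `±y±_α` have norm at most
`1 - ρ/2 + t + ρ/4 ≤ 1`. A vector with `|e*(w)| ≤ (1 - ρ)‖w‖` is normalized into the slab, so
both gauges give it the same value `‖w‖`.
-/

open Filter Topology Set Metric

section Gauge

variable {E : Type*} [NormedAddCommGroup E] [NormedSpace ℝ E]

theorem gauge_eq_norm_of_inv_norm_smul_mem {s : Set E} (hs : Absorbent ℝ s)
    (hs₁ : s ⊆ closedBall 0 1) {w : E} (hw : ‖w‖⁻¹ • w ∈ s) : gauge s w = ‖w‖ := by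
  rcases eq_or_ne w 0 with rfl | hw₀
  · simp
  refine le_antisymm (gauge_le_of_mem (norm_nonneg w) ⟨_, hw, ?_⟩) ?_
  · exact smul_inv_smul₀ (norm_ne_zero_iff.mpr hw₀) w
  · simpa using le_gauge_of_subset_closedBall hs zero_le_one hs₁ (x := w)

def unitSlab (f : E →L[ℝ] ℝ) (c : ℝ) : Set E :=
  closedBall 0 1 ∩ {x | |f x| ≤ c}

variable {f : E →L[ℝ] ℝ} {c : ℝ}

theorem unitSlab_mem_nhds_zero (hc : 0 < c) : unitSlab f c ∈ 𝓝 (0 : E) := by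
  have hcont : Continuous fun x => |f x| := continuous_abs.comp f.continuous
  have hIic : Iic c ∈ 𝓝 |f 0| := by simpa using Iic_mem_nhds hc
  exact inter_mem (closedBall_mem_nhds 0 one_pos) (hcont.continuousAt.preimage_mem_nhds hIic)

theorem inv_norm_smul_mem_unitSlab (hc : 0 ≤ c) {w : E} (hw : |f w| ≤ c * ‖w‖) :
    ‖w‖⁻¹ • w ∈ unitSlab f c := by
  rcases eq_or_ne w 0 with rfl | hw₀
  · simpa [unitSlab] using hc
  have hpos : 0 < ‖w‖ := norm_pos_iff.mpr hw₀
  refine ⟨by simp [norm_smul, hpos.ne'], ?_⟩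
  simp only [mem_ofPred_eq, map_smul, smul_eq_mul, abs_mul, abs_inv, abs_norm]
  rw [inv_mul_le_iff₀ hpos, mul_comm]
  exact hw

theorem gauge_eq_norm_of_unitSlab_subset (hc : 0 < c) {s : Set E} (hslab : unitSlab f c ⊆ s)
    (hs₁ : s ⊆ closedBall 0 1) {w : E} (hw : |f w| ≤ c * ‖w‖) : gauge s w = ‖w‖ :=
  gauge_eq_norm_of_inv_norm_smul_mem
    (absorbent_nhds_zero (mem_of_superset (unitSlab_mem_nhds_zero hc) hslab)) hs₁
    (hslab (inv_norm_smul_mem_unitSlab hc.le hw))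

theorem unitSlab_subset_closedBall_diff :
    unitSlab f c ⊆ closedBall 0 1 \
      ({x ∈ closedBall 0 1 | c < f x} ∪ Neg.neg '' {x ∈ closedBall 0 1 | c < f x}) := by
  rintro x ⟨hx₁, hxc : |f x| ≤ c⟩
  refine ⟨hx₁, ?_⟩
  rintro (⟨-, hlt⟩ | ⟨y, ⟨-, hlt⟩, rfl⟩)
  · linarith [le_abs_self (f x)]
  · rw [map_neg, abs_neg] at hxc
    linarith [le_abs_self (f y)]

theorem norm_smul_add_smul_add_smul_le_one {e h v : E} (he : ‖e‖ ≤ 1) (hh : ‖h‖ ≤ 1)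
    (hv : ‖v‖ ≤ 1) {a b d : ℝ} (ha : 0 ≤ a) (hb : 0 ≤ b) (hd : 0 ≤ d) (habd : a + b + d ≤ 1) :
    ‖a • e + b • h + d • v‖ ≤ 1 :=
  calc ‖a • e + b • h + d • v‖ ≤ ‖a • e‖ + ‖b • h‖ + ‖d • v‖ := norm_add₃_le
    _ = a * ‖e‖ + b * ‖h‖ + d * ‖v‖ := by
      rw [norm_smul, norm_smul, norm_smul, Real.norm_of_nonneg ha, Real.norm_of_nonneg hb,
        Real.norm_of_nonneg hd]
    _ ≤ a * 1 + b * 1 + d * 1 := by gcongr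
    _ ≤ 1 := by linarith

end Gauge

theorem statement14_general {X : Type*} [NormedAddCommGroup X] [NormedSpace ℝ X]
    (ρ t : ℝ) (hρ1 : ρ < 1 / 4) (ht0 : 0 < t) (ht1 : t < ρ / 16)
    (v e h : X) (hv : ‖v‖ = 1) (he : ‖e‖ = 1) (hh : ‖h‖ = 1)
    (es : X →L[ℝ] ℝ)
    (xp xm yp ym : X)
    (hxp : xp = (1 - ρ / 2) • e + t • h) (hxm : xm = (1 - ρ / 2) • e - t • h)
    (hyp : yp = xp + (ρ / 4) • v) (hym : ym = xm - (ρ / 4) • v)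
    (BX SA BA : Set X)
    (hBX : BX = Metric.closedBall (0 : X) 1)
    (hSA : SA = {x ∈ BX | 1 - ρ < es x})
    (hBA : BA = closure (convexHull ℝ ((BX \ (SA ∪ Neg.neg '' SA)) ∪ {yp, ym, -yp, -ym})))
    :
    (∀ w : X, |es w| ≤ (1 - ρ) * ‖w‖ → gauge BA w = ‖w‖) ∧
    (∀ w : X, ‖w‖ = 1 → |es w| ≤ 1 - ρ → gauge BA w = 1) := by
  have hyp₁ : ‖yp‖ ≤ 1 := by
    rw [hyp, hxp]
    exact norm_smul_add_smul_add_smul_le_one he.le hh.le hv.le (by linarith) ht0.le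
      (by linarith) (by linarith)
  have hym₁ : ‖ym‖ ≤ 1 := by
    rw [hym, hxm, sub_eq_add_neg, sub_eq_add_neg, ← smul_neg, ← smul_neg]
    exact norm_smul_add_smul_add_smul_le_one he.le (by rw [norm_neg, hh]) (by rw [norm_neg, hv])
      (by linarith) ht0.le (by linarith) (by linarith)
  have hslab : unitSlab es (1 - ρ) ⊆ BA := by
    rw [hBA, hSA, hBX]
    exact unitSlab_subset_closedBall_diff.trans
      (subset_union_left.trans ((subset_convexHull ℝ _).trans subset_closure))
  have hBA₁ : BA ⊆ closedBall 0 1 := by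
    rw [hBA, hBX]
    refine closure_minimal (convexHull_min ?_ (convex_closedBall 0 1)) isClosed_closedBall
    rintro x (⟨hx, -⟩ | hx)
    · exact hx
    · rcases hx with rfl | rfl | rfl | rfl <;> simpa
  have key (w : X) (hw : |es w| ≤ (1 - ρ) * ‖w‖) : gauge BA w = ‖w‖ :=
    gauge_eq_norm_of_unitSlab_subset (by linarith) hslab hBA₁ hw
  exact ⟨key, fun w hw₁ hw => by rw [key w (by rwa [hw₁, mul_one]), hw₁]⟩

theorem statement14 {X : Type*} [NormedAddCommGroup X] [NormedSpace ℝ X] [CompleteSpace X]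
    (ρ t : ℝ) (hρ0 : 0 < ρ) (hρ1 : ρ < 1 / 4) (ht0 : 0 < t) (ht1 : t < ρ / 16)
    (v e h : X) (hv : ‖v‖ = 1) (he : ‖e‖ = 1) (hh : ‖h‖ = 1)
    (vs es hs : X →L[ℝ] ℝ) (hvs : ‖vs‖ = 1) (hes : ‖es‖ = 1) (hhs : ‖hs‖ = 1)
    (hvv : vs v = 1) (hee : es e = 1) (hhh : hs h = 1) (heh : |es h| < ρ / 800)
    (xp xm yp ym : X)
    (hxp : xp = (1 - ρ / 2) • e + t • h) (hxm : xm = (1 - ρ / 2) • e - t • h)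
    (hyp : yp = xp + (ρ / 4) • v) (hym : ym = xm - (ρ / 4) • v)
    (BX SA BA : Set X)
    (hBX : BX = Metric.closedBall (0 : X) 1)
    (hSA : SA = {x ∈ BX | 1 - ρ < es x})
    (hBA : BA = closure (convexHull ℝ ((BX \ (SA ∪ Neg.neg '' SA)) ∪ {yp, ym, -yp, -ym})))
    :
    (∀ w : X, |es w| ≤ (1 - ρ) * ‖w‖ → gauge BA w = ‖w‖) ∧
    (∀ w : X, ‖w‖ = 1 → |es w| ≤ 1 - ρ → gauge BA w = 1) :=
  statement14_general ρ t hρ1 ht0 ht1 v e h hv he hh es xp xm yp ym hxp hxm hyp hym BX SA BA hBX hSA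
    hBA
end

section
/- Let (X,‖·‖) be a strictly convex real normed space and let K ⊆ X be a nonempty compact convex subset. Then for every x ∈ X there exists a unique point R(x) ∈ K with ‖x − R(x)‖ = inf{‖x − c‖ : c ∈ K}, and the resulting nearest point map R : X → X is continuous. -/
open Filter Topology Set

private lemma sInf_image_eq_infDist {X : Type*} [NormedAddCommGroup X]
    (K : Set X) (hne : K.Nonempty) (x : X) :
    sInf ((fun c => ‖x - c‖) '' K) = Metric.infDist x K := by
  rw [Metric.infDist_eq_iInf]
  rw [iInf, ← Set.image_eq_range]
  congr 1
  ext y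
  simp [dist_eq_norm]

private lemma nearest_unique {X : Type*} [NormedAddCommGroup X] [NormedSpace ℝ X]
    (hsc : ∀ x y : X, ‖x‖ = 1 → ‖y‖ = 1 → ‖(2 : ℝ)⁻¹ • (x + y)‖ = 1 → x = y)
    {K : Set X} (hconv : Convex ℝ K) {x c₁ c₂ : X} (h₁ : c₁ ∈ K) (h₂ : c₂ ∈ K)
    (hd₁ : ‖x - c₁‖ = Metric.infDist x K) (hd₂ : ‖x - c₂‖ = Metric.infDist x K) :
    c₁ = c₂ := by
  set d := Metric.infDist x K with hd
  rcases eq_or_lt_of_le (Metric.infDist_nonneg (s := K) (x := x)) with h0 | h0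
  · have e1 : x - c₁ = 0 := by rw [← norm_eq_zero, hd₁, hd, ← h0]
    have e2 : x - c₂ = 0 := by rw [← norm_eq_zero, hd₂, hd, ← h0]
    have h1 := sub_eq_zero.mp e1
    have h2 := sub_eq_zero.mp e2
    rw [← h1, ← h2]
  · -- d > 0 case
    have hdne : d ≠ 0 := ne_of_gt h0
    set m : X := (2 : ℝ)⁻¹ • (c₁ + c₂) with hm
    have hmK : m ∈ K := by
      have := hconv h₁ h₂ (by norm_num : (0:ℝ) ≤ 2⁻¹) (by norm_num : (0:ℝ) ≤ 2⁻¹) (by norm_num)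
      simpa [hm, smul_add] using this
    have hxm : x - m = (2 : ℝ)⁻¹ • ((x - c₁) + (x - c₂)) := by
      rw [hm, smul_add, smul_add]
      have : x = (2 : ℝ)⁻¹ • x + (2 : ℝ)⁻¹ • x := by
        rw [← add_smul]; norm_num
      rw [smul_sub, smul_sub]
      nth_rewrite 1 [this]
      abel
    have hle : ‖x - m‖ ≤ d := by
      rw [hxm]
      calc ‖(2 : ℝ)⁻¹ • ((x - c₁) + (x - c₂))‖
          ≤ (2 : ℝ)⁻¹ * (‖x - c₁‖ + ‖x - c₂‖) := by
            rw [norm_smul]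
            simp only [norm_inv, Real.norm_ofNat]
            gcongr
            exact norm_add_le _ _
        _ = d := by rw [hd₁, hd₂]; ring
    have hge : d ≤ ‖x - m‖ := by
      rw [← dist_eq_norm]
      exact Metric.infDist_le_dist_of_mem hmK
    have hmeq : ‖x - m‖ = d := le_antisymm hle hge
    have hu : ‖d⁻¹ • (x - c₁)‖ = 1 := by
      rw [norm_smul, hd₁, norm_inv, Real.norm_eq_abs, abs_of_pos h0]
      field_simp
      exact hd
    have hv : ‖d⁻¹ • (x - c₂)‖ = 1 := by
      rw [norm_smul, hd₂, norm_inv, Real.norm_eq_abs, abs_of_pos h0]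
      field_simp
      exact hd
    have hmid : ‖(2 : ℝ)⁻¹ • (d⁻¹ • (x - c₁) + d⁻¹ • (x - c₂))‖ = 1 := by
      rw [← smul_add, smul_comm, ← hxm, norm_smul, norm_inv, Real.norm_eq_abs,
        abs_of_pos h0, hmeq]
      field_simp
      exact hd
    have := hsc _ _ hu hv hmid
    have h := smul_right_injective X (inv_ne_zero hdne) this
    have : c₁ - c₂ = 0 := by
      have := sub_eq_zero.mpr h
      rw [sub_sub_sub_cancel_left] at this
      rw [← neg_eq_zero]
      simpa using this
    exact sub_eq_zero.mp this

theorem statement19 {X : Type*} [NormedAddCommGroup X] [NormedSpace ℝ X]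
    (hsc : ∀ x y : X, ‖x‖ = 1 → ‖y‖ = 1 → ‖(2 : ℝ)⁻¹ • (x + y)‖ = 1 → x = y)
    (K : Set X) (hne : K.Nonempty) (hc : IsCompact K) (hconv : Convex ℝ K) :
    ∃ R : X → X,
      (∀ x : X, R x ∈ K ∧ ‖x - R x‖ = sInf ((fun c => ‖x - c‖) '' K) ∧
        ∀ c ∈ K, ‖x - c‖ = sInf ((fun c' => ‖x - c'‖) '' K) → c = R x) ∧
      Continuous R := by
  have hex : ∀ x : X, ∃ c ∈ K, ‖x - c‖ = Metric.infDist x K := by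
    intro x
    obtain ⟨c, hcK, hcd⟩ := hc.exists_infDist_eq_dist hne x
    exact ⟨c, hcK, by rw [← dist_eq_norm, hcd]⟩
  choose R hRK hRd using hex
  refine ⟨R, fun x => ⟨hRK x, ?_, fun c hcK hcd => ?_⟩, ?_⟩
  · rw [sInf_image_eq_infDist K hne]; exact hRd x
  · rw [sInf_image_eq_infDist K hne] at hcd
    exact nearest_unique hsc hconv hcK (hRK x) hcd (hRd x)
  · -- continuity
    rw [continuous_iff_seqContinuous]
    intro u x hu
    apply tendsto_of_subseq_tendsto
    intro ns hns
    obtain ⟨c, hcK, φ, hφ, hφt⟩ := hc.tendsto_subseq (fun n => hRK (u (ns n)))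
    refine ⟨φ, ?_⟩
    have hux : Tendsto (fun n => u (ns (φ n))) atTop (𝓝 x) :=
      (hu.comp hns).comp hφ.tendsto_atTop
    have hnorm : Tendsto (fun n => ‖u (ns (φ n)) - R (u (ns (φ n)))‖) atTop (𝓝 ‖x - c‖) :=
      (hux.sub hφt).norm
    have hinf : Tendsto (fun n => Metric.infDist (u (ns (φ n))) K) atTop
        (𝓝 (Metric.infDist x K)) :=
      ((Metric.continuous_infDist_pt K).tendsto x).comp hux
    have heq : (fun n => ‖u (ns (φ n)) - R (u (ns (φ n)))‖)
        = fun n => Metric.infDist (u (ns (φ n))) K := funext fun n => hRd _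
    rw [heq] at hnorm
    have hxc : ‖x - c‖ = Metric.infDist x K := tendsto_nhds_unique hnorm hinf
    have : c = R x := nearest_unique hsc hconv hcK (hRK x) hxc (hRd x)
    rw [← this]
    exact hφt
end
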